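/- arXiv:1909.07839 — 7 statements merged into one kernel-verified Lean document; each statement's English description precedes it below -/
import Mathlib

section
/- Let A and B be qubit projectors as above with angle θ between them. If a pair (x, y) ∈ [0, 1/4]² satisfies x + y ≥ (1 + cos² 2θ)/4, then there exists a qubit density matrix ρ with ΔA_ρ = x and ΔB_ρ = y. -/
open Matrix Complex Real
open scoped ComplexOrder

noncomputable def σx : Matrix (Fin 2) (Fin 2) ℂ := !![0, 1; 1, 0]
noncomputable def σy : Matrix (Fin 2) (Fin 2) ℂ := !![0, -Complex.I; Complex.I, 0]
noncomputable def σz : Matrix (Fin 2) (Fin 2) ℂ := !![1, 0; 0, -1]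

/-- `r · σ` for `r ∈ ℝ³`. -/
noncomputable def pauliDot (r : ℝ × ℝ × ℝ) : Matrix (Fin 2) (Fin 2) ℂ :=
  (r.1 : ℂ) • σx + (r.2.1 : ℂ) • σy + (r.2.2 : ℂ) • σz

/-- `(I + r·σ)/2`. -/
noncomputable def bloch (r : ℝ × ℝ × ℝ) : Matrix (Fin 2) (Fin 2) ℂ :=
  (1/2 : ℂ) • (1 + pauliDot r)

def dot3 (r a : ℝ × ℝ × ℝ) : ℝ := r.1 * a.1 + r.2.1 * a.2.1 + r.2.2 * a.2.2

/-- Variance `Tr(A²ρ) - (Tr(Aρ))²` (real part, the quantities being real for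
Hermitian `A` and density `ρ`). -/
noncomputable def variance {n : Type*} [Fintype n] [DecidableEq n]
    (A ρ : Matrix n n ℂ) : ℝ :=
  ((A * A * ρ).trace).re - (((A * ρ).trace).re) ^ 2

/-- Variance of a projector: `Tr(Aρ) - (Tr(Aρ))²`. -/
noncomputable def pvar {n : Type*} [Fintype n] [DecidableEq n]
    (A ρ : Matrix n n ℂ) : ℝ :=
  ((A * ρ).trace).re - (((A * ρ).trace).re) ^ 2

/-- A density matrix: positive semidefinite with unit trace. -/
def IsDensity {n : Type*} [Fintype n] [DecidableEq n] (ρ : Matrix n n ℂ) : Prop :=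
  ρ.PosSemidef ∧ ρ.trace = 1

/-- Rank-one projector `|ψ⟩⟨ψ|` from a vector `ψ`. -/
noncomputable def outer {n : Type*} (ψ : n → ℂ) : Matrix n n ℂ :=
  Matrix.vecMulVec ψ (star ψ)

lemma bloch_eq (p q : ℝ) :
    bloch (p, 0, q) = !![((1+q:ℝ):ℂ)/2, ((p:ℝ):ℂ)/2; ((p:ℝ):ℂ)/2, ((1-q:ℝ):ℂ)/2] := by
  ext i j
  fin_cases i <;> fin_cases j <;>
    simp [bloch, pauliDot, σx, σy, σz, Matrix.one_apply] <;> push_cast <;> ring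

lemma psd_aux (p q : ℝ) (h : p^2 + q^2 ≤ 1) :
    (!![((1+q:ℝ):ℂ)/2, ((p:ℝ):ℂ)/2; ((p:ℝ):ℂ)/2, ((1-q:ℝ):ℂ)/2]).PosSemidef := by
  rw [Matrix.posSemidef_iff_dotProduct_mulVec]
  constructor
  · ext i j
    fin_cases i <;> fin_cases j <;>
      simp [Matrix.conjTranspose_apply] <;> norm_cast
  · intro z
    have hre : (star z ⬝ᵥ (!![((1+q:ℝ):ℂ)/2, ((p:ℝ):ℂ)/2; ((p:ℝ):ℂ)/2, ((1-q:ℝ):ℂ)/2]).mulVec z) =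
        (((1+q) * Complex.normSq (z 0) + (1-q) * Complex.normSq (z 1)) / 2
          + p * ((z 0).re * (z 1).re + (z 0).im * (z 1).im) : ℝ) := by
      simp [dotProduct, Matrix.mulVec, Fin.sum_univ_two, Complex.ext_iff,
        Complex.normSq_apply, Complex.add_re, Complex.add_im, Complex.mul_re, Complex.mul_im]
      constructor <;> ring
    rw [hre]
    rw [Complex.zero_le_real]
    set x0 := (z 0).re; set y0 := (z 0).im; set x1 := (z 1).re; set y1 := (z 1).im
    simp only [Complex.normSq_apply]
    nlinarith [sq_nonneg (x0*y1 - x1*y0),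
      sq_nonneg (q*(x0^2+y0^2-x1^2-y1^2) + 2*p*(x0*x1+y0*y1)),
      sq_nonneg (p*(x0^2+y0^2-x1^2-y1^2) - 2*q*(x0*x1+y0*y1)),
      sq_nonneg (x0^2+y0^2+x1^2+y1^2 + q*(x0^2+y0^2-x1^2-y1^2) + 2*p*(x0*x1+y0*y1)),
      sq_nonneg (x0^2+y0^2-x1^2-y1^2), sq_nonneg (x0*x1+y0*y1),
      mul_nonneg (sq_nonneg (x0*y1-x1*y0)) (sub_nonneg.mpr h)]

/-- With `a = (0,0,1)`, `b = (sin 2θ, 0, cos 2θ)`, `θ ∈ (0, π/2)`, any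
point `(x,y) ∈ [0,1/4]²` with `x + y ≥ (1 + cos² 2θ)/4` is attained by the
variances of some qubit density matrix. -/
theorem qubit_triangle_region_attained (θ : ℝ)
    (hθ : θ ∈ Set.Ioo 0 (Real.pi / 2)) (x y : ℝ)
    (hx : x ∈ Set.Icc 0 (1 / 4 : ℝ)) (hy : y ∈ Set.Icc 0 (1 / 4 : ℝ))
    (hxy : x + y ≥ (1 + (Real.cos (2 * θ)) ^ 2) / 4) :
    ∃ ρ : Matrix (Fin 2) (Fin 2) ℂ, IsDensity ρ ∧
      pvar (bloch (0, 0, 1)) ρ = x ∧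
      pvar (bloch (Real.sin (2 * θ), 0, Real.cos (2 * θ))) ρ = y := by
  obtain ⟨hθ0, hθ1⟩ := hθ
  set c := Real.cos (2 * θ) with hc
  set s := Real.sin (2 * θ) with hsd
  have hs : 0 < s := Real.sin_pos_of_pos_of_lt_pi (by linarith) (by linarith [Real.pi_pos])
  have hcs : c ^ 2 + s ^ 2 = 1 := by rw [hc, hsd]; exact Real.cos_sq_add_sin_sq _
  set u := Real.sqrt (1 - 4 * x) with hud
  have hu2 : u ^ 2 = 1 - 4 * x := Real.sq_sqrt (by linarith [hx.2])
  have hu0 : 0 ≤ u := Real.sqrt_nonneg _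
  set v := Real.sqrt (1 - 4 * y) with hvd
  have hv2 : v ^ 2 = 1 - 4 * y := Real.sq_sqrt (by linarith [hy.2])
  have hv0 : 0 ≤ v := Real.sqrt_nonneg _
  set ε := if 0 ≤ c then (1 : ℝ) else -1 with hεd
  have hε2 : ε ^ 2 = 1 := by rw [hεd]; split_ifs <;> norm_num
  have hεc : 0 ≤ ε * c := by rw [hεd]; split_ifs with h <;> nlinarith
  set r := (ε * v - c * u) / s with hrd
  have hsr : s * r = ε * v - c * u := by rw [hrd]; field_simp
  have hsum : u ^ 2 + v ^ 2 ≤ s ^ 2 := by nlinarith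
  have key : (ε * v - c * u) ^ 2 + s ^ 2 * u ^ 2 ≤ s ^ 2 := by
    nlinarith [mul_nonneg (mul_nonneg hεc hu0) hv0]
  have hsr2 : (s * r) ^ 2 = (ε * v - c * u) ^ 2 := by rw [hsr]
  have hnorm : r ^ 2 + u ^ 2 ≤ 1 := by
    have h2 : s ^ 2 * (r ^ 2 + u ^ 2) ≤ s ^ 2 * 1 := by nlinarith [key, hsr2]
    exact le_of_mul_le_mul_left h2 (show (0:ℝ) < s ^ 2 by positivity)
  refine ⟨bloch (r, 0, u), ⟨?_, ?_⟩, ?_, ?_⟩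
  · rw [bloch_eq]; exact psd_aux r u hnorm
  · rw [bloch_eq, Matrix.trace_fin_two_of]
    push_cast
    ring
  · have ht : ((bloch ((0:ℝ), (0:ℝ), (1:ℝ)) * bloch (r, 0, u)).trace) = (((1 + u) / 2 : ℝ) : ℂ) := by
      rw [bloch_eq, bloch_eq, Matrix.mul_fin_two, Matrix.trace_fin_two_of]
      push_cast
      ring
    rw [pvar, ht, Complex.ofReal_re,
      show (1 + u) / 2 - ((1 + u) / 2) ^ 2 = (1 - u ^ 2) / 4 from by ring, hu2]
    ring
  · have ht : ((bloch (s, (0:ℝ), c) * bloch (r, 0, u)).trace) = (((1 + ε * v) / 2 : ℝ) : ℂ) := by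
      rw [bloch_eq, bloch_eq, Matrix.mul_fin_two, Matrix.trace_fin_two_of]
      push_cast
      have hsC : (s : ℂ) ≠ 0 := Complex.ofReal_ne_zero.mpr hs.ne'
      rw [show (ε : ℂ) * (v : ℂ) = (s : ℂ) * ((ε * v * s⁻¹ - c * u * s⁻¹ : ℝ) : ℂ) + (c : ℂ) * u by
        push_cast; field_simp; ring]
      rw [hrd]; push_cast
      ring
    rw [pvar, ht, Complex.ofReal_re,
      show (1 + ε * v) / 2 - ((1 + ε * v) / 2) ^ 2 = (1 - ε ^ 2 * v ^ 2) / 4 from by ring,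
      hε2, hv2]
    ring
end

section
/- Let A and B be qubit projectors with Bloch vectors a = (0,0,1) and b = (sin 2θ, 0, cos 2θ). For every point (ΔA, ΔB) attained by a mixed state ρ, the same point is attained by some pure state |ψ⟩; i.e., the uncertainty region for pure states equals the uncertainty region for mixed states. -/
open Matrix Complex Real
open scoped ComplexOrder

-- Auxiliary lemmas ------------------------------------------------------

lemma blochA' : bloch (0,0,1) = !![1,0;0,0] := by
  ext i j
  fin_cases i <;> fin_cases j <;>
    simp [bloch, pauliDot, σx, σy, σz, Matrix.one_apply]
  norm_num

lemma blochB' (s c : ℝ) :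
    bloch (s,0,c) = !![(1+(c:ℂ))/2, (s:ℂ)/2; (s:ℂ)/2, (1-(c:ℂ))/2] := by
  ext i j
  fin_cases i <;> fin_cases j <;>
    simp [bloch, pauliDot, σx, σy, σz, Matrix.one_apply] <;> ring

lemma traceMul' (a b c d : ℂ) (M : Matrix (Fin 2) (Fin 2) ℂ) :
    (!![a,b;c,d] * M).trace = a * M 0 0 + b * M 1 0 + c * M 0 1 + d * M 1 1 := by
  rw [Matrix.trace_fin_two]
  simp [Matrix.mul_apply, Fin.sum_univ_two]
  ring

lemma traceA' (M : Matrix (Fin 2) (Fin 2) ℂ) :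
    ((bloch (0,0,1)) * M).trace = M 0 0 := by
  rw [blochA', traceMul']; ring

lemma traceAA' (M : Matrix (Fin 2) (Fin 2) ℂ) :
    ((bloch (0,0,1)) * (bloch (0,0,1)) * M).trace = M 0 0 := by
  rw [blochA', Matrix.mul_fin_two, traceMul']; ring

lemma traceB' (s c : ℝ) (M : Matrix (Fin 2) (Fin 2) ℂ) :
    ((bloch (s,0,c)) * M).trace =
      (1+(c:ℂ))/2 * M 0 0 + (s:ℂ)/2 * (M 0 1 + M 1 0) + (1-(c:ℂ))/2 * M 1 1 := by
  rw [blochB', traceMul']; ring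

lemma traceBB' (s c : ℝ) (hsc : s^2 + c^2 = 1) (M : Matrix (Fin 2) (Fin 2) ℂ) :
    ((bloch (s,0,c)) * (bloch (s,0,c)) * M).trace = ((bloch (s,0,c)) * M).trace := by
  have h : (s:ℂ)^2 + (c:ℂ)^2 = 1 := by exact_mod_cast congrArg (Complex.ofReal) hsc
  rw [blochB', Matrix.mul_fin_two, traceMul', traceMul']
  linear_combination ((M 0 0 + M 1 1)/4) * h

lemma re_lin' (s c : ℝ) (M : Matrix (Fin 2) (Fin 2) ℂ) :
    ((1+(c:ℂ))/2 * M 0 0 + (s:ℂ)/2 * (M 0 1 + M 1 0) + (1-(c:ℂ))/2 * M 1 1).re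
      = (1+c)/2 * (M 0 0).re + s/2 * ((M 0 1 + M 1 0).re) + (1-c)/2 * (M 1 1).re := by
  have h1 : (1+(c:ℂ))/2 = ((((1+c)/2 : ℝ)) : ℂ) := by push_cast; ring
  have h2 : (s:ℂ)/2 = (((s/2 : ℝ)) : ℂ) := by push_cast; ring
  have h3 : (1-(c:ℂ))/2 = ((((1-c)/2 : ℝ)) : ℂ) := by push_cast; ring
  rw [h1, h2, h3]
  simp [Complex.add_re, Complex.ofReal_mul]

lemma var_match' (s c : ℝ) (hsc : s^2 + c^2 = 1) (M N : Matrix (Fin 2) (Fin 2) ℂ)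
    (h00 : (M 0 0).re = (N 0 0).re) (h11 : (M 1 1).re = (N 1 1).re)
    (h01 : (M 0 1 + M 1 0).re = (N 0 1 + N 1 0).re) :
    variance (bloch (0,0,1)) M = variance (bloch (0,0,1)) N ∧
    variance (bloch (s,0,c)) M = variance (bloch (s,0,c)) N := by
  constructor
  · unfold variance
    rw [traceAA', traceAA', traceA', traceA', h00]
  · unfold variance
    rw [traceBB' s c hsc, traceBB' s c hsc, traceB', traceB', re_lin', re_lin',
      h00, h11, h01]

lemma density_facts' (ρ : Matrix (Fin 2) (Fin 2) ℂ) (hρ : IsDensity ρ) :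
    (ρ 1 0) = star (ρ 0 1) ∧ (ρ 0 0).im = 0 ∧ (ρ 1 1).im = 0 ∧
    (ρ 0 0).re + (ρ 1 1).re = 1 ∧ 0 ≤ (ρ 0 0).re ∧ 0 ≤ (ρ 1 1).re ∧
    Complex.normSq (ρ 0 1) ≤ (ρ 0 0).re * (ρ 1 1).re := by
  obtain ⟨hpsd, htr⟩ := hρ
  have herm := hpsd.1
  have h10 : ρ 1 0 = star (ρ 0 1) := by
    have h := Matrix.ext_iff.2 herm 0 1
    rw [Matrix.conjTranspose_apply] at h
    rw [← h, star_star]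
  have h00 : (ρ 0 0).im = 0 := by
    have h := congrArg Complex.im (Matrix.ext_iff.2 herm 0 0)
    rw [Matrix.conjTranspose_apply] at h
    simp at h; linarith
  have h11 : (ρ 1 1).im = 0 := by
    have h := congrArg Complex.im (Matrix.ext_iff.2 herm 1 1)
    rw [Matrix.conjTranspose_apply] at h
    simp at h; linarith
  have htr' : (ρ 0 0).re + (ρ 1 1).re = 1 := by
    have := congrArg Complex.re htr
    rw [Matrix.trace_fin_two] at this
    simpa using this
  have hd0 : 0 ≤ (ρ 0 0).re := by
    have h := hpsd.dotProduct_mulVec_nonneg ![1, 0]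
    have e : star ![(1:ℂ), 0] ⬝ᵥ ρ *ᵥ ![1, 0] = ρ 0 0 := by
      simp [Matrix.mulVec, dotProduct, Fin.sum_univ_two]
    rw [e] at h
    exact (Complex.le_def.1 h).1
  have hd1 : 0 ≤ (ρ 1 1).re := by
    have h := hpsd.dotProduct_mulVec_nonneg ![0, 1]
    have e : star ![(0:ℂ), 1] ⬝ᵥ ρ *ᵥ ![0, 1] = ρ 1 1 := by
      simp [Matrix.mulVec, dotProduct, Fin.sum_univ_two]
    rw [e] at h
    exact (Complex.le_def.1 h).1
  have hdet : 0 ≤ (ρ.det).re := by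
    rw [herm.det_eq_prod_eigenvalues]
    rw [← RCLike.ofReal_prod]
    exact_mod_cast Finset.prod_nonneg fun i (_ : i ∈ Finset.univ) => hpsd.eigenvalues_nonneg i
  have hns : Complex.normSq (ρ 0 1) ≤ (ρ 0 0).re * (ρ 1 1).re := by
    have hdf := Matrix.det_fin_two ρ
    rw [h10, show ρ 0 1 * star (ρ 0 1) = (Complex.normSq (ρ 0 1) : ℂ) from Complex.mul_conj _] at hdf
    have := congrArg Complex.re hdf
    rw [Complex.sub_re, Complex.mul_re, h00, Complex.ofReal_re] at this
    rw [this] at hdet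
    nlinarith [hdet]
  exact ⟨h10, h00, h11, htr', hd0, hd1, hns⟩

lemma outer_apply' {n : Type*} (ψ : n → ℂ) (i j : n) :
    outer ψ i j = ψ i * star (ψ j) := by
  simp [outer, Matrix.vecMulVec_apply]

lemma outer_density' (ψ : Fin 2 → ℂ) (hψ : (∑ i, ‖ψ i‖ ^ 2) = 1) :
    IsDensity (outer ψ) := by
  refine ⟨Matrix.PosSemidef.of_dotProduct_mulVec_nonneg ?_ ?_, ?_⟩
  · ext i j
    simp [outer, Matrix.conjTranspose_apply, Matrix.vecMulVec_apply, mul_comm]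
  · intro x
    have e : star x ⬝ᵥ (outer ψ) *ᵥ x
        = star (star (ψ 0) * x 0 + star (ψ 1) * x 1) * (star (ψ 0) * x 0 + star (ψ 1) * x 1) := by
      simp [outer, dotProduct, Matrix.mulVec, Matrix.vecMulVec_apply, Fin.sum_univ_two]
      ring
    rw [e]
    exact star_mul_self_nonneg _
  · rw [Matrix.trace_fin_two, outer_apply', outer_apply',
      show ψ 0 * star (ψ 0) = ((‖ψ 0‖^2 : ℝ) : ℂ) from by push_cast; exact Complex.mul_conj' _,
      show ψ 1 * star (ψ 1) = ((‖ψ 1‖^2 : ℝ) : ℂ) from by push_cast; exact Complex.mul_conj' _]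
    rw [Fin.sum_univ_two] at hψ
    exact_mod_cast congrArg (Complex.ofReal) hψ

lemma exists_pure_match' (ρ : Matrix (Fin 2) (Fin 2) ℂ)
    (h10 : ρ 1 0 = star (ρ 0 1)) (htr' : (ρ 0 0).re + (ρ 1 1).re = 1)
    (hd0 : 0 ≤ (ρ 0 0).re) (hns : Complex.normSq (ρ 0 1) ≤ (ρ 0 0).re * (ρ 1 1).re) :
    ∃ ψ : Fin 2 → ℂ, (∑ i, ‖ψ i‖ ^ 2) = 1 ∧
      ((outer ψ) 0 0).re = (ρ 0 0).re ∧ ((outer ψ) 1 1).re = (ρ 1 1).re ∧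
      ((outer ψ) 0 1 + (outer ψ) 1 0).re = (ρ 0 1 + ρ 1 0).re := by
  set t := (ρ 0 0).re with ht
  set r := (ρ 0 1).re with hr
  have h11re : (ρ 1 1).re = 1 - t := by linarith
  have hre10 : (ρ 0 1 + ρ 1 0).re = 2 * r := by
    rw [Complex.add_re, h10]
    simp [Complex.conj_re, hr]
    ring
  have hrsq : r ^ 2 ≤ Complex.normSq (ρ 0 1) := by
    rw [Complex.normSq_apply]; nlinarith [sq_nonneg (ρ 0 1).im]
  rcases eq_or_lt_of_le hd0 with h0 | h0
  · -- t = 0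
    have ht0 : t = 0 := h0.symm
    have hr0 : r = 0 := by nlinarith
    refine ⟨![0, 1], by norm_num [Fin.sum_univ_two], ?_, ?_, ?_⟩
    · simp [outer_apply', ht0]
    · simp [outer_apply', h11re, ht0]
    · simp [outer_apply', hre10, hr0]
  · -- t > 0
    have hd : 0 ≤ t * (1 - t) - r ^ 2 := by nlinarith
    set u := Real.sqrt t with hu
    set w := Real.sqrt (t * (1 - t) - r ^ 2) with hw
    have hu2 : u ^ 2 = t := Real.sq_sqrt hd0
    have hw2 : w ^ 2 = t * (1 - t) - r ^ 2 := Real.sq_sqrt hd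
    have hune : (u : ℂ) ≠ 0 := by
      simp only [ne_eq, Complex.ofReal_eq_zero]
      positivity
    have hnum : ‖(r:ℂ) + Complex.I * (w:ℂ)‖ ^ 2 = r ^ 2 + w ^ 2 := by
      rw [Complex.sq_norm, Complex.normSq_apply]
      simp
      ring
    refine ⟨![(u : ℂ), ((r : ℂ) + Complex.I * (w : ℂ)) / (u : ℂ)], ?_, ?_, ?_, ?_⟩
    · rw [Fin.sum_univ_two]
      have e0 : ‖![(u : ℂ), ((r : ℂ) + Complex.I * (w : ℂ)) / (u : ℂ)] 0‖ ^ 2 = t := by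
        simp [Complex.norm_real]
        exact hu2
      have e1 : ‖![(u : ℂ), ((r : ℂ) + Complex.I * (w : ℂ)) / (u : ℂ)] 1‖ ^ 2 = 1 - t := by
        simp only [Matrix.cons_val_one, Matrix.head_cons, Matrix.cons_val_zero]
        rw [norm_div, div_pow, hnum, hw2]
        rw [show ‖(u:ℂ)‖ ^ 2 = t by simp [Complex.norm_real]; exact hu2]
        field_simp
        ring
      rw [e0, e1]; ring
    · simp only [outer_apply', Matrix.cons_val_zero]
      rw [show star ((u:ℂ)) = (u:ℂ) by simp [Complex.star_def, Complex.conj_ofReal]]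
      rw [← Complex.ofReal_mul]
      rw [Complex.ofReal_re]
      nlinarith [hu2]
    · simp only [outer_apply', Matrix.cons_val_one, Matrix.head_cons, Matrix.cons_val_zero]
      rw [show (((r : ℂ) + Complex.I * (w : ℂ)) / (u : ℂ)) * star (((r : ℂ) + Complex.I * (w : ℂ)) / (u : ℂ))
          = ((‖(((r : ℂ) + Complex.I * (w : ℂ)) / (u : ℂ))‖^2 : ℝ) : ℂ) from by push_cast; exact Complex.mul_conj' _]
      rw [Complex.ofReal_re]
      rw [norm_div, div_pow, hnum, hw2,
        show ‖(u:ℂ)‖ ^ 2 = t by simp [Complex.norm_real]; exact hu2, h11re]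
      field_simp
      ring
    · simp only [outer_apply', Matrix.cons_val_zero, Matrix.cons_val_one, Matrix.head_cons]
      rw [show (u:ℂ) * star (((r : ℂ) + Complex.I * (w : ℂ)) / (u : ℂ))
          + (((r : ℂ) + Complex.I * (w : ℂ)) / (u : ℂ)) * star ((u:ℂ)) = 2 * (r:ℂ) from by
        simp only [star_div₀, star_add, star_mul', Complex.star_def, Complex.conj_ofReal,
          Complex.conj_I]
        field_simp
        ring]
      rw [hre10]
      simp

/-- For the qubit projectors `A`, `B` with Bloch vectors `(0,0,1)` and
`(sin 2θ, 0, cos 2θ)`, the pure-state uncertainty region equals the mixed-state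
uncertainty region. -/
theorem qubit_pure_eq_mixed_region (θ : ℝ) :
    {p : ℝ × ℝ | ∃ ψ : Fin 2 → ℂ, (∑ i, ‖ψ i‖ ^ 2) = 1 ∧
        p = (variance (bloch (0, 0, 1)) (outer ψ),
             variance (bloch (Real.sin (2 * θ), 0, Real.cos (2 * θ))) (outer ψ))} =
    {p : ℝ × ℝ | ∃ ρ : Matrix (Fin 2) (Fin 2) ℂ, IsDensity ρ ∧
        p = (variance (bloch (0, 0, 1)) ρ,
             variance (bloch (Real.sin (2 * θ), 0, Real.cos (2 * θ))) ρ)} := by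
  ext p
  simp only [Set.mem_setOf_eq]
  constructor
  · rintro ⟨ψ, hψ, hp⟩
    exact ⟨outer ψ, outer_density' ψ hψ, hp⟩
  · rintro ⟨ρ, hρ, hp⟩
    obtain ⟨h10, h00, h11, htr', hd0, hd1, hns⟩ := density_facts' ρ hρ
    obtain ⟨ψ, hψ, m00, m11, m01⟩ := exists_pure_match' ρ h10 htr' hd0 hns
    refine ⟨ψ, hψ, ?_⟩
    have hvm := var_match' (Real.sin (2 * θ)) (Real.cos (2 * θ))
      (Real.sin_sq_add_cos_sq (2 * θ)) (outer ψ) ρ m00 m11 m01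
    rw [hp, Prod.mk.injEq]
    exact ⟨hvm.1.symm, hvm.2.symm⟩
end

section
/- For any two orthogonal projections P and Q on a finite-dimensional complex Hilbert space, the pure-state uncertainty region equals the mixed-state uncertainty region: {(ΔP_ψ, ΔQ_ψ) : ψ unit vector} = {(ΔP_ρ, ΔQ_ρ) : ρ density matrix}. -/
open Matrix Complex Real
open scoped ComplexOrder

section Aux
variable {d : ℕ}

noncomputable def qf (A : Matrix (Fin d) (Fin d) ℂ) (ψ : Fin d → ℂ) : ℝ :=
  (star ψ ⬝ᵥ A.mulVec ψ).re


lemma trace_mul_outer (A : Matrix (Fin d) (Fin d) ℂ) (ψ : Fin d → ℂ) :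
    (A * Matrix.vecMulVec ψ (star ψ)).trace = star ψ ⬝ᵥ A.mulVec ψ := by
  simp only [Matrix.trace, Matrix.diag, Matrix.mul_apply, Matrix.vecMulVec_apply,
    dotProduct, Matrix.mulVec, Pi.star_apply]
  congr 1; ext i
  rw [Finset.mul_sum]
  congr 1; ext j
  ring


lemma qf_smul (A : Matrix (Fin d) (Fin d) ℂ) (c : ℂ) (ψ : Fin d → ℂ) :
    qf A (c • ψ) = ‖c‖^2 * qf A ψ := by
  simp only [qf, Matrix.mulVec_smul, star_smul, smul_dotProduct,
    dotProduct_smul, smul_eq_mul, star_def]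
  rw [← mul_assoc, Complex.mul_conj, Complex.re_ofReal_mul,
    Complex.normSq_eq_norm_sq]

noncomputable def crossf (A : Matrix (Fin d) (Fin d) ℂ) (x y : Fin d → ℂ) : ℝ :=
  (star x ⬝ᵥ A.mulVec y + star y ⬝ᵥ A.mulVec x).re

lemma qf_expand (A : Matrix (Fin d) (Fin d) ℂ) (α β : ℝ) (x y : Fin d → ℂ) :
    qf A ((α:ℂ) • x + (β:ℂ) • y)
      = α^2 * qf A x + β^2 * qf A y + α*β * crossf A x y := by
  simp only [qf, crossf, star_add, star_smul, Matrix.mulVec_add, Matrix.mulVec_smul,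
    add_dotProduct, dotProduct_add, smul_dotProduct,
    dotProduct_smul, smul_eq_mul, star_def, Complex.conj_ofReal,
    Complex.add_re, ← mul_assoc, ← Complex.ofReal_mul, Complex.re_ofReal_mul]
  ring

lemma qf_addA (A B : Matrix (Fin d) (Fin d) ℂ) (ψ : Fin d → ℂ) :
    qf (A + B) ψ = qf A ψ + qf B ψ := by
  simp [qf, Matrix.add_mulVec, dotProduct_add]

lemma qf_subA (A B : Matrix (Fin d) (Fin d) ℂ) (ψ : Fin d → ℂ) :
    qf (A - B) ψ = qf A ψ - qf B ψ := by
  simp [qf, Matrix.sub_mulVec, dotProduct_sub]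

lemma qf_smulA (r : ℝ) (A : Matrix (Fin d) (Fin d) ℂ) (ψ : Fin d → ℂ) :
    qf ((r:ℂ) • A) ψ = r * qf A ψ := by
  simp [qf, Matrix.smul_mulVec, dotProduct_smul, Complex.re_ofReal_mul]

lemma qf_one (ψ : Fin d → ℂ) : qf 1 ψ = ∑ i, ‖ψ i‖^2 := by
  simp only [qf, Matrix.one_mulVec, dotProduct, Pi.star_apply, star_def]
  rw [Complex.re_sum]
  congr 1; ext i
  rw [mul_comm, Complex.mul_conj]
  rw [Complex.normSq_eq_norm_sq, Complex.ofReal_re]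

lemma qf_one_pos {ψ : Fin d → ℂ} (h : ψ ≠ 0) : 0 < qf 1 ψ := by
  rw [qf_one]
  obtain ⟨i, hi⟩ : ∃ i, ψ i ≠ 0 := by
    by_contra hc; push_neg at hc; exact h (funext hc)
  exact Finset.sum_pos' (fun j _ => by positivity)
    ⟨i, Finset.mem_univ i, by simp [Complex.sq_norm, Complex.normSq_pos, hi]⟩

lemma herm_conj {A : Matrix (Fin d) (Fin d) ℂ} (hA : A.IsHermitian)
    (x y : Fin d → ℂ) :
    star (star y ⬝ᵥ A.mulVec x) = star x ⬝ᵥ A.mulVec y := by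
  rw [Matrix.star_dotProduct, star_star, Matrix.star_mulVec,
    Matrix.dotProduct_mulVec, hA.eq]

lemma exists_phase (β : ℂ) : ∃ c : ℂ, ‖c‖ = 1 ∧ (c * β).re = 0 := by
  by_cases hβ : β = 0
  · exact ⟨1, by simp, by simp [hβ]⟩
  · refine ⟨(‖β‖⁻¹ : ℝ) * (Complex.I * (starRingEnd ℂ β)), ?_, ?_⟩
    · simp [norm_mul, hβ, norm_ne_zero_iff.mpr hβ]
    · have : ((‖β‖⁻¹ : ℝ) : ℂ) * (Complex.I * (starRingEnd ℂ β)) * β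
          = Complex.I * (((‖β‖⁻¹ * Complex.normSq β : ℝ)) : ℂ) := by
        push_cast
        rw [Complex.normSq_eq_conj_mul_self]
        ring
      rw [this]
      simp

lemma core {A B : Matrix (Fin d) (Fin d) ℂ} (hB : B.IsHermitian)
    {u v : Fin d → ℂ} (hu : qf 1 u = 1) (hv : qf 1 v = 1)
    (hAu : qf A u = 0) (hBu : qf B u = 0) (hAv : qf A v = 1) (hBv : qf B v = 0)
    {t : ℝ} (ht0 : 0 ≤ t) (ht1 : t ≤ 1) :
    ∃ w, qf 1 w = 1 ∧ qf A w = t ∧ qf B w = 0 := by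
  obtain ⟨c, hc1, hcre⟩ := exists_phase (star v ⬝ᵥ B.mulVec u)
  set u₁ : Fin d → ℂ := c • u with hu₁def
  have hqsmul : ∀ (M : Matrix (Fin d) (Fin d) ℂ), qf M u₁ = qf M u := by
    intro M; rw [hu₁def, qf_smul, hc1]; ring
  have h1u₁ : qf 1 u₁ = 1 := by rw [hqsmul, hu]
  have hAu₁ : qf A u₁ = 0 := by rw [hqsmul, hAu]
  have hBu₁ : qf B u₁ = 0 := by rw [hqsmul, hBu]
  -- cross term of B between u₁ and v vanishes
  have hcrossB : crossf B u₁ v = 0 := by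
    have h1 : star u₁ ⬝ᵥ B.mulVec v = star (c * (star v ⬝ᵥ B.mulVec u)) := by
      rw [hu₁def, star_mul', herm_conj hB u v]
      simp [smul_dotProduct]
    have h2 : star v ⬝ᵥ B.mulVec u₁ = c * (star v ⬝ᵥ B.mulVec u) := by
      rw [hu₁def, Matrix.mulVec_smul, dotProduct_smul, smul_eq_mul]
    rw [crossf, h1, h2, Complex.add_re]
    simp only [Complex.star_def, Complex.conj_re]
    linarith [hcre]
  set cA := crossf A u₁ v with hcA
  set c1 := crossf (1 : Matrix (Fin d) (Fin d) ℂ) u₁ v with hc1c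
  set x : ℝ → (Fin d → ℂ) := fun s => ((1-s : ℝ) : ℂ) • u₁ + ((s : ℝ) : ℂ) • v
    with hxdef
  set num : ℝ → ℝ := fun s => s^2 + (1-s)*s*cA with hnum
  set den : ℝ → ℝ := fun s => (1-s)^2 + s^2 + (1-s)*s*c1 with hden
  have hqA : ∀ s, qf A (x s) = num s := by
    intro s; rw [hxdef]; simp only; rw [qf_expand, hAu₁, hAv]; simp [hnum, hcA]
  have hq1 : ∀ s, qf 1 (x s) = den s := by
    intro s; rw [hxdef]; simp only; rw [qf_expand, h1u₁, hv]; simp [hden, hc1c]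
  have hqB : ∀ s, qf B (x s) = 0 := by
    intro s; rw [hxdef]; simp only; rw [qf_expand, hBu₁, hBv, hcrossB]; ring
  have hxne : ∀ s, x s ≠ 0 := by
    intro s hx0
    by_cases hs0 : s = 0
    · rw [hxdef] at hx0; simp only [hs0] at hx0
      simp only [sub_zero, Complex.ofReal_one, one_smul, Complex.ofReal_zero,
        zero_smul, add_zero] at hx0
      rw [hx0] at h1u₁
      simp [qf] at h1u₁
    · have hsC : ((s : ℝ) : ℂ) ≠ 0 := by
        simpa using hs0
      have h5 : ((s : ℝ) : ℂ) • v = -(((1-s : ℝ) : ℂ) • u₁) := by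
        rw [hxdef] at hx0
        simpa [eq_neg_iff_add_eq_zero, add_comm] using hx0
      have h6 : v = (((s : ℝ) : ℂ)⁻¹ * -((1-s : ℝ) : ℂ)) • u₁ := by
        have h7 := congrArg (fun y => ((s : ℝ) : ℂ)⁻¹ • y) h5
        simp only [inv_smul_smul₀ hsC] at h7
        rw [h7]
        module
      rw [h6, qf_smul, hAu₁, mul_zero] at hAv
      norm_num at hAv
  have hdpos : ∀ s, 0 < den s := by
    intro s; rw [← hq1 s]; exact qf_one_pos (hxne s)
  set g : ℝ → ℝ := fun s => num s / den s with hg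
  have hcont : ContinuousOn g (Set.Icc 0 1) := by
    apply ContinuousOn.div
    · exact (by fun_prop : Continuous num).continuousOn
    · exact (by fun_prop : Continuous den).continuousOn
    · intro s _; exact (hdpos s).ne'
  have hg0 : g 0 = 0 := by simp [hg, hnum, hden]
  have hg1 : g 1 = 1 := by simp [hg, hnum, hden]
  have hmem : t ∈ Set.Icc (g 0) (g 1) := by
    rw [hg0, hg1]; exact ⟨ht0, ht1⟩
  obtain ⟨s, _, hgs⟩ := intermediate_value_Icc (by norm_num : (0:ℝ) ≤ 1) hcont hmem
  set N := den s with hN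
  have hNpos : 0 < N := hdpos s
  refine ⟨(((Real.sqrt N)⁻¹ : ℝ) : ℂ) • x s, ?_, ?_, ?_⟩ <;>
    rw [qf_smul] <;>
    rw [Complex.norm_real, Real.norm_eq_abs, _root_.abs_of_nonneg (by positivity),
      inv_pow, Real.sq_sqrt hNpos.le]
  · rw [hq1 s, ← hN, inv_mul_cancel₀ hNpos.ne']
  · rw [hqA s, inv_mul_eq_div]; exact hgs
  · rw [hqB s, mul_zero]

lemma herm_real_smul (r : ℝ) {A : Matrix (Fin d) (Fin d) ℂ} (hA : A.IsHermitian) :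
    ((r : ℂ) • A).IsHermitian := by
  rw [Matrix.IsHermitian, Matrix.conjTranspose_smul, hA.eq]
  congr 1
  simp [Complex.conj_ofReal]

lemma joint_range_convex {P Q : Matrix (Fin d) (Fin d) ℂ}
    (hP : P.IsHermitian) (hQ : Q.IsHermitian) :
    Convex ℝ {p : ℝ × ℝ | ∃ ψ : Fin d → ℂ, qf 1 ψ = 1 ∧ p = (qf P ψ, qf Q ψ)} := by
  rintro p₀ ⟨u, hu, hp₀⟩ p₁ ⟨v, hv, hp₁⟩ a b ha hb hab
  by_cases hpp : p₀ = p₁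
  · exact ⟨u, hu, by rw [← hpp, Convex.combo_self hab]; exact hp₀⟩
  · set dx := p₁.1 - p₀.1 with hdx
    set dy := p₁.2 - p₀.2 with hdy
    set n := dx^2 + dy^2 with hn
    have hn0 : 0 < n := by
      rcases Prod.ext_iff.not.mp hpp with h
      push_neg at h
      by_cases h1 : p₀.1 = p₁.1
      · have h2 := h h1
        have : dy ≠ 0 := by rw [hdy]; exact sub_ne_zero.mpr (Ne.symm h2)
        positivity
      · have : dx ≠ 0 := by rw [hdx]; exact sub_ne_zero.mpr (Ne.symm h1)
        positivity
    set A' : Matrix (Fin d) (Fin d) ℂ :=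
      ((dx/n : ℝ) : ℂ) • P + ((dy/n : ℝ) : ℂ) • Q
        - (((dx*p₀.1+dy*p₀.2)/n : ℝ) : ℂ) • 1 with hA'
    set B' : Matrix (Fin d) (Fin d) ℂ :=
      ((-dy/n : ℝ) : ℂ) • P + ((dx/n : ℝ) : ℂ) • Q
        - (((-dy*p₀.1+dx*p₀.2)/n : ℝ) : ℂ) • 1 with hB'
    have hB'h : B'.IsHermitian := by
      exact ((herm_real_smul _ hP).add (herm_real_smul _ hQ)).sub
        (herm_real_smul _ Matrix.isHermitian_one)
    have hqval : ∀ ψ : Fin d → ℂ, qf 1 ψ = 1 →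
        qf A' ψ = (dx*(qf P ψ) + dy*(qf Q ψ) - (dx*p₀.1+dy*p₀.2))/n ∧
        qf B' ψ = (-dy*(qf P ψ) + dx*(qf Q ψ) - (-dy*p₀.1+dx*p₀.2))/n := by
      intro ψ h1
      rw [hA', hB']
      rw [qf_subA, qf_addA, qf_smulA, qf_smulA, qf_smulA, h1]
      rw [qf_subA, qf_addA, qf_smulA, qf_smulA, qf_smulA, h1]
      constructor <;> (field_simp; try ring)
    have hP0 : p₀.1 = qf P u ∧ p₀.2 = qf Q u := by
      rw [hp₀]; exact ⟨rfl, rfl⟩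
    have hP1 : p₁.1 = qf P v ∧ p₁.2 = qf Q v := by
      rw [hp₁]; exact ⟨rfl, rfl⟩
    obtain ⟨hqAu, hqBu⟩ := hqval u hu
    obtain ⟨hqAv, hqBv⟩ := hqval v hv
    have hAu : qf A' u = 0 := by
      rw [hqAu, ← hP0.1, ← hP0.2]; field_simp; ring
    have hBu : qf B' u = 0 := by
      rw [hqBu, ← hP0.1, ← hP0.2]; field_simp; ring
    have hAv : qf A' v = 1 := by
      rw [hqAv, ← hP1.1, ← hP1.2, hdx, hdy]
      field_simp
      ring
    have hBv : qf B' v = 0 := by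
      rw [hqBv, ← hP1.1, ← hP1.2, hdx, hdy]
      field_simp
      ring
    have hb1 : b ≤ 1 := by linarith
    obtain ⟨w, hw1, hwA, hwB⟩ := core hB'h hu hv hAu hBu hAv hBv hb hb1
    obtain ⟨hqAw, hqBw⟩ := hqval w hw1
    set X := qf P w with hX
    set Y := qf Q w with hY
    have e1 : dx*X + dy*Y - (dx*p₀.1+dy*p₀.2) = b*n := by
      rw [hqAw] at hwA
      field_simp at hwA
      linarith
    have e2 : -dy*X + dx*Y - (-dy*p₀.1+dx*p₀.2) = 0 := by
      rw [hqBw] at hwB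
      field_simp at hwB
      linarith
    have hXv : X = p₀.1 + b*dx := by
      have h3 : n * (X - p₀.1 - b*dx) = 0 := by rw [hn]; linear_combination dx * e1 - dy * e2
      have := mul_eq_zero.mp h3
      rcases this with h | h
      · exact absurd h hn0.ne'
      · linarith
    have hYv : Y = p₀.2 + b*dy := by
      have h3 : n * (Y - p₀.2 - b*dy) = 0 := by rw [hn]; linear_combination dy * e1 + dx * e2
      rcases mul_eq_zero.mp h3 with h | h
      · exact absurd h hn0.ne'
      · linarith
    refine ⟨w, hw1, ?_⟩
    have : (a • p₀ + b • p₁ : ℝ × ℝ) = (a*p₀.1 + b*p₁.1, a*p₀.2 + b*p₁.2) := rfl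
    rw [this, Prod.ext_iff]
    constructor
    · rw [show qf P w = X from rfl, hXv, hdx]; linear_combination p₀.1 * hab
    · rw [show qf Q w = Y from rfl, hYv, hdy]; linear_combination p₀.2 * hab

section Mixed
variable {ρ : Matrix (Fin d) (Fin d) ℂ}

lemma col_dot (hH : ρ.IsHermitian) (A : Matrix (Fin d) (Fin d) ℂ) (i : Fin d) :
    ((star (hH.eigenvectorUnitary : Matrix (Fin d) (Fin d) ℂ) * A
        * (hH.eigenvectorUnitary : Matrix (Fin d) (Fin d) ℂ)) i i)
      = star (fun k => (hH.eigenvectorUnitary : Matrix (Fin d) (Fin d) ℂ) k i) ⬝ᵥ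
          A.mulVec (fun k => (hH.eigenvectorUnitary : Matrix (Fin d) (Fin d) ℂ) k i) := by
  simp only [Matrix.mul_apply, Matrix.star_eq_conjTranspose, Matrix.conjTranspose_apply,
    dotProduct, Matrix.mulVec, Pi.star_apply, Finset.sum_mul, Finset.mul_sum]
  rw [Finset.sum_comm]
  congr 1; ext k
  congr 1; ext l
  ring

lemma col_unit (hH : ρ.IsHermitian) (i : Fin d) :
    qf 1 (fun k => (hH.eigenvectorUnitary : Matrix (Fin d) (Fin d) ℂ) k i) = 1 := by
  have h := col_dot hH 1 i
  rw [mul_one] at h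
  have h2 : (star (hH.eigenvectorUnitary : Matrix (Fin d) (Fin d) ℂ)
      * (hH.eigenvectorUnitary : Matrix (Fin d) (Fin d) ℂ)) = 1 := by
    exact Unitary.coe_star_mul_self _
  rw [h2] at h
  rw [qf, ← h, Matrix.one_apply_eq]
  simp

lemma trace_density (hH : ρ.IsHermitian) (A : Matrix (Fin d) (Fin d) ℂ) :
    ((A * ρ).trace).re = ∑ i, hH.eigenvalues i *
      qf A (fun k => (hH.eigenvectorUnitary : Matrix (Fin d) (Fin d) ℂ) k i) := by
  set U : Matrix (Fin d) (Fin d) ℂ := (hH.eigenvectorUnitary : Matrix (Fin d) (Fin d) ℂ)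
    with hU
  have h1 : (A * ρ).trace
      = ((star U * A * U) * Matrix.diagonal (RCLike.ofReal ∘ hH.eigenvalues)).trace := by
    conv_lhs => rw [hH.spectral_theorem, Unitary.conjStarAlgAut_apply]
    rw [show A * (U * Matrix.diagonal (RCLike.ofReal ∘ hH.eigenvalues) * star U)
        = (A * U * Matrix.diagonal (RCLike.ofReal ∘ hH.eigenvalues)) * star U by
      simp [mul_assoc]]
    rw [Matrix.trace_mul_comm]
    simp [mul_assoc]
  rw [h1]
  have h2 : ((star U * A * U) * Matrix.diagonal (RCLike.ofReal ∘ hH.eigenvalues)).trace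
      = ∑ i, (star U * A * U) i i * ((hH.eigenvalues i : ℝ) : ℂ) := by
    simp [Matrix.trace, Matrix.diag, Matrix.mul_diagonal]
  rw [h2, Complex.re_sum]
  congr 1; ext i
  rw [col_dot hH A i, mul_comm, Complex.re_ofReal_mul, qf]

lemma mixed_in_range {P Q : Matrix (Fin d) (Fin d) ℂ}
    (hP : P.IsHermitian) (hQ : Q.IsHermitian)
    (hρ : ρ.PosSemidef) (htr : ρ.trace = 1) :
    ∃ ψ : Fin d → ℂ, qf 1 ψ = 1 ∧
      (((P * ρ).trace).re, ((Q * ρ).trace).re) = (qf P ψ, qf Q ψ) := by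
  have hH : ρ.IsHermitian := hρ.1
  -- sum of eigenvalues is 1
  have hsum : ∑ i, hH.eigenvalues i = 1 := by
    have h := trace_density hH 1
    rw [one_mul, htr] at h
    simp only [Complex.one_re] at h
    rw [h]
    congr 1; ext i
    rw [col_unit hH i, mul_one]
  have key := joint_range_convex hP hQ (d := d)
  have hmem : (((P * ρ).trace).re, ((Q * ρ).trace).re) ∈
      {p : ℝ × ℝ | ∃ ψ : Fin d → ℂ, qf 1 ψ = 1 ∧ p = (qf P ψ, qf Q ψ)} := by
    have heq : (((P * ρ).trace).re, ((Q * ρ).trace).re)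
        = ∑ i, hH.eigenvalues i •
          ((qf P (fun k => (hH.eigenvectorUnitary : Matrix (Fin d) (Fin d) ℂ) k i),
            qf Q (fun k => (hH.eigenvectorUnitary : Matrix (Fin d) (Fin d) ℂ) k i))
            : ℝ × ℝ) := by
      rw [Prod.ext_iff]
      constructor
      · rw [trace_density hH P]
        rw [Prod.fst_sum]
        rfl
      · rw [trace_density hH Q]
        rw [Prod.snd_sum]
        rfl
    rw [heq]
    exact key.sum_mem (fun i _ => hρ.eigenvalues_nonneg i) (by rw [hsum])
      (fun i _ => ⟨_, col_unit hH i, rfl⟩)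
  obtain ⟨ψ, h1, h2⟩ := hmem
  exact ⟨ψ, h1, h2⟩

end Mixed

lemma dot_self (ψ : Fin d → ℂ) :
    star ψ ⬝ᵥ ψ = ((∑ i, ‖ψ i‖^2 : ℝ) : ℂ) := by
  push_cast
  simp only [dotProduct, Pi.star_apply, star_def]
  congr 1; ext i
  rw [mul_comm, Complex.mul_conj]
  norm_cast
  rw [Complex.normSq_eq_norm_sq]

lemma outer_posSemidef (ψ : Fin d → ℂ) : (outer ψ).PosSemidef := by
  rw [outer, Matrix.vecMulVec_eq Unit, ← Matrix.conjTranspose_replicateCol]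
  exact Matrix.posSemidef_self_mul_conjTranspose _

lemma outer_trace (ψ : Fin d → ℂ) (h : (∑ i, ‖ψ i‖^2) = 1) :
    (outer ψ).trace = 1 := by
  have h1 := trace_mul_outer 1 ψ
  rw [one_mul, Matrix.one_mulVec] at h1
  rw [outer, h1, dot_self, h]
  norm_num

end Aux

/-- For any two orthogonal projections `P`, `Q` on a finite-dimensional
complex Hilbert space, the pure-state uncertainty region equals the mixed-state
uncertainty region. -/
theorem projections_pure_eq_mixed_region (d : ℕ)
    (P Q : Matrix (Fin d) (Fin d) ℂ)
    (hP : P.IsHermitian) (hP2 : P * P = P)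
    (hQ : Q.IsHermitian) (hQ2 : Q * Q = Q) :
    {p : ℝ × ℝ | ∃ ψ : Fin d → ℂ, (∑ i, ‖ψ i‖ ^ 2) = 1 ∧
        p = (pvar P (outer ψ), pvar Q (outer ψ))} =
    {p : ℝ × ℝ | ∃ ρ : Matrix (Fin d) (Fin d) ℂ, IsDensity ρ ∧
        p = (pvar P ρ, pvar Q ρ)} := by
  ext p
  simp only [Set.mem_setOf_eq]
  constructor
  · rintro ⟨ψ, hψ, hp⟩
    exact ⟨outer ψ, ⟨outer_posSemidef ψ, outer_trace ψ hψ⟩, hp⟩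
  · rintro ⟨ρ, ⟨hpsd, htr⟩, hp⟩
    obtain ⟨ψ, hψ1, heq⟩ := mixed_in_range hP hQ hpsd htr
    refine ⟨ψ, by rw [← qf_one]; exact hψ1, ?_⟩
    have h1 : ((P * outer ψ).trace).re = ((P * ρ).trace).re := by
      rw [outer, trace_mul_outer]
      exact (congrArg Prod.fst heq).symm
    have h2 : ((Q * outer ψ).trace).re = ((Q * ρ).trace).re := by
      rw [outer, trace_mul_outer]
      exact (congrArg Prod.snd heq).symm
    rw [hp]
    simp [pvar, h1, h2]
end

section
/- Jordan's lemma: for any two orthogonal projections P and Q on ℂᵈ, there exists an orthonormal basis in which P and Q are simultaneously block diagonal with blocks of size one or two, where each 1×1 block of P or Q is (0) or (1), and each 2×2 block has the form P_i = [[1,0],[0,0]], Q_i = [[cos²θ_i, cosθ_i sinθ_i],[cosθ_i sinθ_i, sin²θ_i]] for some θ_i ∈ (0, π/2]. -/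
open Matrix Complex Real
open scoped ComplexOrder
open scoped InnerProductSpace

namespace JordanAux

lemma eig {d : ℕ} (W : Submodule ℂ (EuclideanSpace ℂ (Fin d))) (hW : W ≠ ⊥)
    (f : Module.End ℂ (EuclideanSpace ℂ (Fin d))) (hf : ∀ x ∈ W, f x ∈ W) :
    ∃ (v : EuclideanSpace ℂ (Fin d)) (μ : ℂ), v ∈ W ∧ ‖v‖ = 1 ∧ f v = μ • v := by
  haveI : Nontrivial W := Submodule.nontrivial_iff_ne_bot.2 hW
  let f' : Module.End ℂ W := f.restrict hf
  obtain ⟨μ, hμ⟩ := Module.End.exists_eigenvalue f'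
  obtain ⟨v0, hv0⟩ := hμ.exists_hasEigenvector
  have hv0ne : (v0 : EuclideanSpace ℂ (Fin d)) ≠ 0 := by
    simpa using hv0.right
  have hn : ‖(v0 : EuclideanSpace ℂ (Fin d))‖ ≠ 0 := norm_ne_zero_iff.2 hv0ne
  refine ⟨(‖(v0 : EuclideanSpace ℂ (Fin d))‖⁻¹ : ℂ) • (v0 : EuclideanSpace ℂ (Fin d)), μ, ?_, ?_, ?_⟩
  · exact W.smul_mem _ v0.2
  · rw [norm_smul]
    simp [hn]
  · have happ : f (v0 : EuclideanSpace ℂ (Fin d)) = μ • (v0 : EuclideanSpace ℂ (Fin d)) := by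
      have := hv0.apply_eq_smul
      calc f (v0 : EuclideanSpace ℂ (Fin d)) = (f' v0 : EuclideanSpace ℂ (Fin d)) := rfl
        _ = μ • (v0 : EuclideanSpace ℂ (Fin d)) := by rw [this]; rfl
    rw [_root_.map_smul, happ, smul_comm]


def BlockConc {d : ℕ} (T S : Module.End ℂ (EuclideanSpace ℂ (Fin d)))
    (W : Submodule ℂ (EuclideanSpace ℂ (Fin d))) : Prop :=
  ∃ (m0 : ℕ) (u : Fin m0 → EuclideanSpace ℂ (Fin d))
    (Pb Qb : Matrix (Fin m0) (Fin m0) ℂ),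
    (m0 = 1 ∨ m0 = 2) ∧ (∀ k, u k ∈ W) ∧ Orthonormal ℂ u ∧
    (∀ j, T (u j) = ∑ k, Pb k j • u k) ∧
    (∀ j, S (u j) = ∑ k, Qb k j • u k) ∧
    (m0 = 1 → ∀ j k, (Pb j k = 0 ∨ Pb j k = 1) ∧ (Qb j k = 0 ∨ Qb j k = 1)) ∧
    (m0 = 2 → ∃ θ ∈ Set.Ioc 0 (Real.pi / 2), ∀ j k,
      Pb j k = (if j.val = 0 ∧ k.val = 0 then 1 else 0) ∧
      Qb j k = (((if j.val = 0 then Real.cos θ else Real.sin θ) *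
        (if k.val = 0 then Real.cos θ else Real.sin θ) : ℝ) : ℂ))

lemma single_block {d : ℕ} (T S : Module.End ℂ (EuclideanSpace ℂ (Fin d)))
    (W : Submodule ℂ (EuclideanSpace ℂ (Fin d))) (v : EuclideanSpace ℂ (Fin d))
    (hv : v ∈ W) (hn : ‖v‖ = 1) (a b : ℂ) (ha : a = 0 ∨ a = 1) (hb : b = 0 ∨ b = 1)
    (hT : T v = a • v) (hS : S v = b • v) : BlockConc T S W := by
  classical
  refine ⟨1, fun _ => v, fun _ _ => a, fun _ _ => b, Or.inl rfl, fun _ => hv, ?_, ?_, ?_, ?_, ?_⟩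
  · rw [orthonormal_iff_ite]
    intro i j
    have : i = j := Subsingleton.elim i j
    subst this
    simp [inner_self_eq_norm_sq_to_K, hn]
  · intro j; rw [Fin.sum_univ_one]; exact hT
  · intro j; rw [Fin.sum_univ_one]; exact hS
  · intro _ j k; exact ⟨ha, hb⟩
  · intro h; exact absurd h (by norm_num)


set_option maxHeartbeats 1600000 in
lemma exists_block {d : ℕ} (T S : Module.End ℂ (EuclideanSpace ℂ (Fin d)))
    (hTsa : ∀ x y, ⟪T x, y⟫_ℂ = ⟪x, T y⟫_ℂ) (hT2 : ∀ x, T (T x) = T x)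
    (hSsa : ∀ x y, ⟪S x, y⟫_ℂ = ⟪x, S y⟫_ℂ) (hS2 : ∀ x, S (S x) = S x)
    (W : Submodule ℂ (EuclideanSpace ℂ (Fin d)))
    (hTW : ∀ x ∈ W, T x ∈ W) (hSW : ∀ x ∈ W, S x ∈ W) (hW : W ≠ ⊥) :
    BlockConc T S W := by
  classical
  set Wp : Submodule ℂ (EuclideanSpace ℂ (Fin d)) := W ⊓ LinearMap.ker (T - LinearMap.id) with hWpdef
  have hWp_mem : ∀ x, x ∈ Wp ↔ x ∈ W ∧ T x = x := by
    intro x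
    simp [hWpdef, Submodule.mem_inf, LinearMap.mem_ker, sub_eq_zero]
  by_cases hWpbot : Wp = ⊥
  · -- T vanishes on W : take an eigenvector of S in W
    have hT0 : ∀ x ∈ W, T x = 0 := by
      intro x hx
      have h1 : T x ∈ Wp := (hWp_mem (T x)).2 ⟨hTW x hx, hT2 x⟩
      rw [hWpbot] at h1; simpa using h1
    obtain ⟨v, μ, hvW, hvn, hvS⟩ := eig W hW S hSW
    have hvne : v ≠ 0 := by intro h; rw [h] at hvn; simp at hvn
    have hμ : μ = 0 ∨ μ = 1 := by
      have h1 : μ • (μ • v) = μ • v := by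
        rw [← hvS, ← _root_.map_smul, ← hvS, hS2]
      have h2 : (μ * μ - μ) • v = 0 := by
        rw [sub_smul, mul_smul, h1, sub_self]
      have h3 : μ * μ - μ = 0 := by
        rcases smul_eq_zero.1 h2 with h | h
        · exact h
        · exact absurd h hvne
      have h4 : μ * (μ - 1) = 0 := by linear_combination h3
      rcases mul_eq_zero.1 h4 with h | h
      · exact Or.inl h
      · exact Or.inr (sub_eq_zero.1 h)
    exact single_block T S W v hvW hvn 0 μ (Or.inl rfl) hμ (by rw [hT0 v hvW, zero_smul]) hvS
  · -- main case
    have hWpW : ∀ x ∈ Wp, x ∈ W := fun x hx => ((hWp_mem x).1 hx).1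
    set A : Module.End ℂ (EuclideanSpace ℂ (Fin d)) := T ∘ₗ S ∘ₗ T with hA
    have hAWp : ∀ x ∈ Wp, A x ∈ Wp := by
      intro x hx
      obtain ⟨hxW, hxT⟩ := (hWp_mem x).1 hx
      have h1 : A x = T (S x) := by simp [hA, LinearMap.comp_apply, hxT]
      refine (hWp_mem _).2 ⟨?_, ?_⟩
      · rw [h1]; exact hTW _ (hSW _ hxW)
      · rw [h1]; exact hT2 _
    obtain ⟨v, μ, hvWp, hvn, hvA⟩ := eig Wp hWpbot A hAWp
    obtain ⟨hvW, hvT⟩ := (hWp_mem v).1 hvWp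
    have hvv : ⟪v, v⟫_ℂ = 1 := by
      rw [inner_self_eq_norm_sq_to_K, hvn]; norm_num
    have hAv : T (S v) = μ • v := by
      have h1 : A v = T (S (T v)) := rfl
      rw [hvT] at h1; rw [← h1, hvA]
    set lam : ℝ := ‖S v‖ ^ 2 with hlam
    have hvSv : ⟪v, S v⟫_ℂ = (lam : ℂ) := by
      have h1 := hSsa v (S v)
      rw [hS2] at h1
      rw [← h1, inner_self_eq_norm_sq_to_K]
      norm_cast
    have hμlam : μ = (lam : ℂ) := by
      have h1 : ⟪v, T (S v)⟫_ℂ = μ := by rw [hAv, inner_smul_right, hvv, mul_one]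
      rw [← h1, ← hTsa v (S v), hvT, hvSv]
    have hlam0 : 0 ≤ lam := sq_nonneg _
    have hlam1 : lam ≤ 1 := by
      have hCS := norm_inner_le_norm (𝕜 := ℂ) v (S v)
      rw [hvSv, hvn, one_mul] at hCS
      have h2 : ‖(lam : ℂ)‖ = lam := by
        rw [Complex.norm_real, Real.norm_of_nonneg hlam0]
      rw [h2] at hCS
      -- lam = ‖S v‖^2 ≤ ‖S v‖  ⇒  ‖S v‖ ≤ 1 ⇒ lam ≤ 1
      nlinarith [norm_nonneg (S v), hlam]
    by_cases hl0 : lam = 0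
    · -- S v = 0
      have hSv0 : S v = 0 := by
        have : ‖S v‖ = 0 := by
          have := hlam.symm.trans hl0
          nlinarith [norm_nonneg (S v)]
        exact norm_eq_zero.1 this
      exact single_block T S W v hvW hvn 1 0 (Or.inr rfl) (Or.inl rfl)
        (by rw [hvT, one_smul]) (by rw [hSv0, zero_smul])
    by_cases hl1 : lam = 1
    · -- S v = v
      have hre : RCLike.re (⟪S v, v⟫_ℂ) = 1 := by
        rw [← inner_conj_symm, hvSv, hl1]
        simp
      have h0 : ‖S v - v‖ ^ 2 = 0 := by
        rw [norm_sub_sq (𝕜 := ℂ), hre, hvn, ← hlam, hl1]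
        ring
      have hSvv2 : S v = v := by
        have := pow_eq_zero_iff (n := 2) (by norm_num) |>.1 h0
        rw [norm_eq_zero] at this
        exact sub_eq_zero.1 this
      exact single_block T S W v hvW hvn 1 1 (Or.inr rfl) (Or.inr rfl)
        (by rw [hvT, one_smul]) (by rw [hSvv2, one_smul])
    -- main 2x2 case : 0 < lam < 1
    have hlampos : 0 < lam := lt_of_le_of_ne hlam0 (Ne.symm hl0)
    have hlamlt : lam < 1 := lt_of_le_of_ne hlam1 hl1
    set c : ℝ := Real.sqrt (lam * (1 - lam)) with hc
    have hcpos : 0 < c := Real.sqrt_pos.2 (mul_pos hlampos (by linarith))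
    have hc2 : c ^ 2 = lam * (1 - lam) := Real.sq_sqrt (le_of_lt (mul_pos hlampos (by linarith)))
    have hcC : ((c : ℂ)) ≠ 0 := by
      simpa using hcpos.ne'
    set u2 : EuclideanSpace ℂ (Fin d) := ((c : ℂ))⁻¹ • (S v - (lam : ℂ) • v) with hu2
    have hSvv : ⟪S v, v⟫_ℂ = (lam : ℂ) := by
      rw [← inner_conj_symm, hvSv, Complex.conj_ofReal]
    have hSS : ⟪S v, S v⟫_ℂ = (lam : ℂ) := by
      rw [inner_self_eq_norm_sq_to_K]; norm_cast
    have hTSv : T (S v) = (lam : ℂ) • v := by rw [hAv, hμlam]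
    have hip12 : ⟪v, u2⟫_ℂ = 0 := by
      rw [hu2, inner_smul_right, inner_sub_right, inner_smul_right, hvSv, hvv]
      ring
    have hip21 : ⟪u2, v⟫_ℂ = 0 := by
      rw [← inner_conj_symm, hip12, map_zero]
    have hip22 : ⟪u2, u2⟫_ℂ = 1 := by
      rw [hu2]
      rw [inner_smul_right, inner_smul_left]
      rw [inner_sub_left, inner_sub_right, inner_sub_right, inner_smul_left,
        inner_smul_right, inner_smul_left, inner_smul_right, hSS, hSvv, hvSv, hvv]
      rw [Complex.conj_ofReal, map_inv₀, Complex.conj_ofReal]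
      have hxy : ((lam:ℂ) - (lam:ℂ)*(lam:ℂ) - ((lam:ℂ)*(lam:ℂ) - (lam:ℂ)*((lam:ℂ)*1))) = ((c:ℂ))^2 := by
        have : ((c:ℂ))^2 = ((lam:ℂ)) * (1 - (lam:ℂ)) := by
          norm_cast
        rw [this]; ring
      field_simp
      linear_combination hxy
    have hnu2 : ‖u2‖ = 1 := by
      rw [norm_eq_sqrt_re_inner (𝕜 := ℂ), hip22]
      simp
    have hu2W : u2 ∈ W := W.smul_mem _ (W.sub_mem (hSW v hvW) (W.smul_mem _ hvW))
    have hSdec : S v = (lam : ℂ) • v + (c : ℂ) • u2 := by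
      rw [hu2, smul_inv_smul₀ hcC]
      abel
    have hTu2 : T u2 = 0 := by
      rw [hu2, _root_.map_smul, map_sub, _root_.map_smul, hTSv, hvT, sub_self, smul_zero]
    have hcc2 : ((c:ℂ)) * (c:ℂ) = (lam:ℂ) * (1 - (lam:ℂ)) := by
      have h := congrArg (Complex.ofReal) hc2
      push_cast at h
      linear_combination h
    have hSu2 : S u2 = (c : ℂ) • v + (((1 - lam : ℝ)) : ℂ) • u2 := by
      have h1 : S u2 = ((c:ℂ))⁻¹ • ((1 - (lam:ℂ)) • S v) := by
        rw [hu2, _root_.map_smul, map_sub, _root_.map_smul, hS2, sub_smul, one_smul]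
      clear_value lam c u2
      rw [h1, hSdec]
      match_scalars
      · field_simp
        linear_combination -hcc2
      · push_cast
        field_simp
    -- the angle
    set θ : ℝ := Real.arcsin (Real.sqrt (1 - lam)) with hθ
    have hsqle : Real.sqrt (1 - lam) ≤ 1 :=
      Real.sqrt_le_one.2 (by linarith)
    have hsin : Real.sin θ = Real.sqrt (1 - lam) :=
      Real.sin_arcsin (le_trans (by norm_num) (Real.sqrt_nonneg _)) hsqle
    have hcos : Real.cos θ = Real.sqrt lam := by
      rw [hθ, Real.cos_arcsin, Real.sq_sqrt (by linarith)]
      congr 1; ring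
    have hθIoc : θ ∈ Set.Ioc 0 (Real.pi / 2) :=
      ⟨Real.arcsin_pos.2 (Real.sqrt_pos.2 (by linarith)), Real.arcsin_le_pi_div_two _⟩
    have hcc : Real.cos θ * Real.cos θ = lam := by
      rw [hcos]; exact Real.mul_self_sqrt hlam0
    have hss : Real.sin θ * Real.sin θ = 1 - lam := by
      rw [hsin]; exact Real.mul_self_sqrt (by linarith)
    have hcs : Real.cos θ * Real.sin θ = c := by
      rw [hcos, hsin, hc, ← Real.sqrt_mul hlam0]
    have hccC : Complex.cos ↑θ * Complex.cos ↑θ = ((lam : ℝ) : ℂ) := by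
      rw [← Complex.ofReal_cos, ← Complex.ofReal_mul, hcc]
    have hscC : Complex.sin ↑θ * Complex.cos ↑θ = ((c : ℝ) : ℂ) := by
      rw [← Complex.ofReal_sin, ← Complex.ofReal_cos, ← Complex.ofReal_mul, mul_comm, hcs]
    have hcsC : Complex.cos ↑θ * Complex.sin ↑θ = ((c : ℝ) : ℂ) := by
      rw [← Complex.ofReal_cos, ← Complex.ofReal_sin, ← Complex.ofReal_mul, hcs]
    have hssC : Complex.sin ↑θ * Complex.sin ↑θ = (((1 - lam : ℝ)) : ℂ) := by
      rw [← Complex.ofReal_sin, ← Complex.ofReal_mul, hss]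
    refine ⟨2, ![v, u2],
      (fun j k => if j.val = 0 ∧ k.val = 0 then 1 else 0),
      (fun j k => (((if j.val = 0 then Real.cos θ else Real.sin θ) *
        (if k.val = 0 then Real.cos θ else Real.sin θ) : ℝ) : ℂ)),
      Or.inr rfl, ?_, ?_, ?_, ?_, ?_, ?_⟩
    · intro k; fin_cases k
      · exact hvW
      · exact hu2W
    · rw [orthonormal_iff_ite]
      intro i j
      fin_cases i <;> fin_cases j <;>
        simp [hvv, hip12, hip21, hip22, hnu2, hvn]
    · intro j
      fin_cases j <;>
        simp [Fin.sum_univ_two, hvT, hTu2]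
    · intro j
      fin_cases j
      · show S v = _
        rw [Fin.sum_univ_two]
        simp only [Matrix.cons_val_zero, Matrix.cons_val_one, Matrix.head_cons]
        norm_num
        rw [hccC, hscC]
        exact hSdec
      · show S u2 = _
        rw [Fin.sum_univ_two]
        simp only [Matrix.cons_val_zero, Matrix.cons_val_one, Matrix.head_cons]
        norm_num
        rw [hcsC, hssC]
        exact hSu2
    · intro h; exact absurd h (by norm_num)
    · intro _
      exact ⟨θ, hθIoc, fun j k => ⟨rfl, rfl⟩⟩


def CoreConc {d : ℕ} (T S : Module.End ℂ (EuclideanSpace ℂ (Fin d)))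
    (W : Submodule ℂ (EuclideanSpace ℂ (Fin d))) (m : ℕ) : Prop :=
  ∃ (ι : Type) (_ : Fintype ι) (B : ι → ℕ)
    (PB QB : ∀ i, Matrix (Fin (B i)) (Fin (B i)) ℂ)
    (V : (Σ i, Fin (B i)) → EuclideanSpace ℂ (Fin d)),
    (∀ i, B i = 1 ∨ B i = 2) ∧
    (∑ i, B i) = m ∧
    (∀ r, V r ∈ W) ∧
    Orthonormal ℂ V ∧
    (∀ i (j : Fin (B i)), T (V ⟨i, j⟩) = ∑ k, PB i k j • V ⟨i, k⟩) ∧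
    (∀ i (j : Fin (B i)), S (V ⟨i, j⟩) = ∑ k, QB i k j • V ⟨i, k⟩) ∧
    (∀ i, B i = 1 → ∀ j k, (PB i j k = 0 ∨ PB i j k = 1) ∧ (QB i j k = 0 ∨ QB i j k = 1)) ∧
    (∀ i, B i = 2 → ∃ θ ∈ Set.Ioc 0 (Real.pi / 2), ∀ j k,
      PB i j k = (if j.val = 0 ∧ k.val = 0 then 1 else 0) ∧
      QB i j k = (((if j.val = 0 then Real.cos θ else Real.sin θ) *
        (if k.val = 0 then Real.cos θ else Real.sin θ) : ℝ) : ℂ))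

lemma core {d : ℕ} (T S : Module.End ℂ (EuclideanSpace ℂ (Fin d)))
    (hTsa : ∀ x y, ⟪T x, y⟫_ℂ = ⟪x, T y⟫_ℂ) (hT2 : ∀ x, T (T x) = T x)
    (hSsa : ∀ x y, ⟪S x, y⟫_ℂ = ⟪x, S y⟫_ℂ) (hS2 : ∀ x, S (S x) = S x) :
    ∀ (m : ℕ) (W : Submodule ℂ (EuclideanSpace ℂ (Fin d))),
      (∀ x ∈ W, T x ∈ W) → (∀ x ∈ W, S x ∈ W) → Module.finrank ℂ W = m →
      CoreConc T S W m := by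
  intro m
  induction m using Nat.strong_induction_on with
  | _ m IH =>
  intro W hTW hSW hrank
  by_cases hWbot : W = ⊥
  · refine ⟨Fin 0, inferInstance, Fin.elim0, fun i => i.elim0, fun i => i.elim0,
      fun r => r.1.elim0, fun i => i.elim0, ?_, fun r => r.1.elim0, ?_, fun i => i.elim0,
      fun i => i.elim0, fun i => i.elim0, fun i => i.elim0⟩
    · rw [← hrank, hWbot]
      simp
    · exact ⟨fun r => r.1.elim0, fun {r s} _ => r.1.elim0⟩
  · obtain ⟨m0, u, Pb, Qb, hm0, huW, huON, hTu, hSu, h1c, h2c⟩ :=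
      exists_block T S hTsa hT2 hSsa hS2 W hTW hSW hWbot
    classical
    set W0 := Submodule.span ℂ (Set.range u) with hW0
    have hW0le : W0 ≤ W := Submodule.span_le.2 (by rintro x ⟨k, rfl⟩; exact huW k)
    have hfr0 : Module.finrank ℂ W0 = m0 := by
      rw [hW0, finrank_span_eq_card huON.linearIndependent, Fintype.card_fin]
    have huW0 : ∀ k, u k ∈ W0 := fun k => Submodule.subset_span ⟨k, rfl⟩
    set W' := W0ᗮ ⊓ W with hW'
    have hsum := Submodule.finrank_add_inf_finrank_orthogonal hW0le
    rw [← hW'] at hsum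
    have hm0pos : 0 < m0 := by rcases hm0 with h | h <;> omega
    have hmpos : 0 < m := by
      rcases Nat.eq_zero_or_pos m with h | h
      · exfalso
        apply hWbot
        rw [← Submodule.finrank_eq_zero (R := ℂ) (S := W), hrank]
        exact h
      · exact h
    have hfr' : Module.finrank ℂ W' = m - m0 := by
      rw [hfr0, hrank] at hsum
      omega
    have hm0le : m0 ≤ m := by
      rw [hfr0, hrank] at hsum
      omega
    have horth : ∀ x ∈ W', ∀ k, ⟪u k, x⟫_ℂ = 0 := fun x hx k =>
      (Submodule.mem_orthogonal _ _).1 (Submodule.mem_inf.1 hx).1 _ (huW0 k)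
    have hinv : ∀ (f : Module.End ℂ (EuclideanSpace ℂ (Fin d))),
        (∀ x y, ⟪f x, y⟫_ℂ = ⟪x, f y⟫_ℂ) → (∀ x ∈ W, f x ∈ W) →
        (∀ (fb : Matrix (Fin m0) (Fin m0) ℂ), (∀ j, f (u j) = ∑ k, fb k j • u k) →
        ∀ x ∈ W', f x ∈ W') := by
      intro f hfsa hfW fb hfu x hx
      refine Submodule.mem_inf.2 ⟨?_, hfW x (Submodule.mem_inf.1 hx).2⟩
      rw [Submodule.mem_orthogonal]
      intro w hw
      induction hw using Submodule.span_induction with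
      | mem w hw =>
        obtain ⟨k, rfl⟩ := hw
        rw [← hfsa (u k) x, hfu k, sum_inner]
        refine Finset.sum_eq_zero fun k' _ => ?_
        rw [inner_smul_left, horth x hx k', mul_zero]
      | zero => exact inner_zero_left _
      | add a b _ _ ha hb => rw [inner_add_left, ha, hb, add_zero]
      | smul c a _ ha => rw [inner_smul_left, ha, mul_zero]
    have hTW' : ∀ x ∈ W', T x ∈ W' := hinv T hTsa hTW Pb hTu
    have hSW' : ∀ x ∈ W', S x ∈ W' := hinv S hSsa hSW Qb hSu
    obtain ⟨ι', hfin', B', PB', QB', V', hB', hsum', hmem', hON', hT', hS', h1', h2'⟩ :=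
      IH (m - m0) (by omega) W' hTW' hSW' hfr'
    refine ⟨Unit ⊕ ι', inferInstance, Sum.elim (fun _ => m0) B',
      (fun i => match i with | .inl _ => Pb | .inr j => PB' j),
      (fun i => match i with | .inl _ => Qb | .inr j => QB' j),
      (fun r => match r with | ⟨.inl _, j⟩ => u j | ⟨.inr i, j⟩ => V' ⟨i, j⟩),
      ?_, ?_, ?_, ?_, ?_, ?_, ?_, ?_⟩
    · rintro (i | i)
      · exact hm0
      · exact hB' i
    · rw [Fintype.sum_sum_type]
      simp only [Sum.elim_inl, Sum.elim_inr]
      rw [hsum']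
      simp
      omega
    · rintro ⟨(i | i), j⟩
      · exact huW j
      · exact (Submodule.mem_inf.1 (hmem' ⟨i, j⟩)).2
    · rw [orthonormal_iff_ite]
      rintro ⟨(ri | ri), rj⟩ ⟨(si | si), sj⟩
      · have h := orthonormal_iff_ite.1 huON rj sj
        show ⟪u rj, u sj⟫_ℂ = _
        rw [h]
        by_cases hj : rj = sj
        · subst hj; simp; rfl
        · simp [hj, Sigma.mk.inj_iff]
          exact (if_neg hj).trans (if_neg (fun hh => hj (eq_of_heq hh))).symm
      · show ⟪u rj, V' ⟨si, sj⟩⟫_ℂ = _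
        rw [(Submodule.mem_orthogonal _ _).1 (Submodule.mem_inf.1 (hmem' ⟨si, sj⟩)).1 _ (huW0 rj)]
        simp
      · show ⟪V' ⟨ri, rj⟩, u sj⟫_ℂ = _
        rw [(Submodule.mem_orthogonal' _ _).1 (Submodule.mem_inf.1 (hmem' ⟨ri, rj⟩)).1 _ (huW0 sj)]
        simp
      · have h := orthonormal_iff_ite.1 hON' ⟨ri, rj⟩ ⟨si, sj⟩
        show ⟪V' ⟨ri, rj⟩, V' ⟨si, sj⟩⟫_ℂ = _
        rw [h]
        by_cases hj : (⟨ri, rj⟩ : Σ i, Fin (B' i)) = ⟨si, sj⟩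
        · rw [if_pos hj, if_pos]
          obtain ⟨h1, h2⟩ := Sigma.mk.inj_iff.1 hj
          subst h1
          cases h2
          rfl
        · rw [if_neg hj, if_neg]
          intro hcon
          apply hj
          obtain ⟨h1, h2⟩ := Sigma.mk.inj_iff.1 hcon
          injection h1 with h1
          subst h1
          simp only [heq_eq_eq] at h2
          subst h2
          rfl
    · rintro (i | i) j
      · exact hTu j
      · exact hT' i j
    · rintro (i | i) j
      · exact hSu j
      · exact hS' i j
    · rintro (i | i) h1 j k
      · exact h1c h1 j k
      · exact h1' i h1 j k
    · rintro (i | i) h2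
      · exact h2c h2
      · exact h2' i h2


end JordanAux

open JordanAux in
/-- Jordan's lemma: for any two orthogonal projections `P`, `Q` on
`ℂᵈ` there is a unitary change of basis in which `P` and `Q` are simultaneously
block diagonal with blocks of size one or two; each `1×1` block of `P` or `Q` is
`(0)` or `(1)`, and on each `2×2` block `P` is `[[1,0],[0,0]]` and `Q` is
`[[cos²θ, cosθ sinθ],[cosθ sinθ, sin²θ]]` for some `θ ∈ (0, π/2]`. -/
theorem jordan_lemma_two_projections (d : ℕ) (P Q : Matrix (Fin d) (Fin d) ℂ)
    (hP : P.IsHermitian) (hP2 : P * P = P)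
    (hQ : Q.IsHermitian) (hQ2 : Q * Q = Q) :
    ∃ (l : ℕ) (sz : Fin l → ℕ) (_ : ∀ i, sz i = 1 ∨ sz i = 2)
      (e : Fin d ≃ (Σ i : Fin l, Fin (sz i)))
      (Pb Qb : ∀ i : Fin l, Matrix (Fin (sz i)) (Fin (sz i)) ℂ)
      (U : Matrix (Fin d) (Fin d) ℂ),
      U ∈ Matrix.unitaryGroup (Fin d) ℂ ∧
      star U * P * U = (Matrix.blockDiagonal' Pb).submatrix e e ∧
      star U * Q * U = (Matrix.blockDiagonal' Qb).submatrix e e ∧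
      (∀ i : Fin l, sz i = 1 →
        (∀ j k : Fin (sz i), (Pb i j k = 0 ∨ Pb i j k = 1) ∧
          (Qb i j k = 0 ∨ Qb i j k = 1))) ∧
      (∀ i : Fin l, sz i = 2 →
        ∃ θ ∈ Set.Ioc 0 (Real.pi / 2),
          (∀ j k : Fin (sz i),
            Pb i j k = (if j.val = 0 ∧ k.val = 0 then 1 else 0) ∧
            Qb i j k = (((if j.val = 0 then Real.cos θ else Real.sin θ) *
              (if k.val = 0 then Real.cos θ else Real.sin θ) : ℝ) : ℂ))) := by
  classical
  set T : Module.End ℂ (EuclideanSpace ℂ (Fin d)) := Matrix.toEuclideanLin P with hT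
  set S : Module.End ℂ (EuclideanSpace ℂ (Fin d)) := Matrix.toEuclideanLin Q with hS
  have happ : ∀ (A : Matrix (Fin d) (Fin d) ℂ) (x : EuclideanSpace ℂ (Fin d)),
      Matrix.toEuclideanLin A x = A.mulVec x := fun A x => rfl
  have hTsa : ∀ x y, ⟪T x, y⟫_ℂ = ⟪x, T y⟫_ℂ := Matrix.isHermitian_iff_isSymmetric.1 hP
  have hSsa : ∀ x y, ⟪S x, y⟫_ℂ = ⟪x, S y⟫_ℂ := Matrix.isHermitian_iff_isSymmetric.1 hQ
  have hT2 : ∀ x, T (T x) = T x := by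
    intro x
    show Matrix.toEuclideanLin P (Matrix.toEuclideanLin P x) = Matrix.toEuclideanLin P x
    apply WithLp.ofLp_injective
    rw [happ, happ, Matrix.mulVec_mulVec, hP2]
  have hS2 : ∀ x, S (S x) = S x := by
    intro x
    show Matrix.toEuclideanLin Q (Matrix.toEuclideanLin Q x) = Matrix.toEuclideanLin Q x
    apply WithLp.ofLp_injective
    rw [happ, happ, Matrix.mulVec_mulVec, hQ2]
  have hrank : Module.finrank ℂ (⊤ : Submodule ℂ (EuclideanSpace ℂ (Fin d))) = d := by
    rw [finrank_top, finrank_euclideanSpace_fin]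
  obtain ⟨ι, hfin, B, PB, QB, V, hB, hsum, -, hON, hTact, hSact, h1c, h2c⟩ :=
    core T S hTsa hT2 hSsa hS2 d ⊤ (fun x _ => Submodule.mem_top)
      (fun x _ => Submodule.mem_top) hrank
  set l : ℕ := Fintype.card ι with hl
  set eqv : Fin l ≃ ι := (Fintype.equivFin ι).symm with heqv
  set sz : Fin l → ℕ := fun i => B (eqv i) with hsz
  set Vf : (Σ i : Fin l, Fin (sz i)) → EuclideanSpace ℂ (Fin d) :=
    fun r => V ⟨eqv r.1, r.2⟩ with hVf
  have hcard : Fintype.card (Fin d) = Fintype.card (Σ i : Fin l, Fin (sz i)) := by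
    rw [Fintype.card_fin, Fintype.card_sigma]
    simp only [Fintype.card_fin]
    rw [← hsum]
    exact (Fintype.sum_equiv eqv _ _ (fun i => rfl)).symm
  set e : Fin d ≃ (Σ i : Fin l, Fin (sz i)) := Fintype.equivOfCardEq hcard with he
  have hinj : Function.Injective
      (fun r : Σ i : Fin l, Fin (sz i) => (⟨eqv r.1, r.2⟩ : Σ i : ι, Fin (B i))) := by
    rintro ⟨a, b⟩ ⟨c, dd⟩ h
    obtain ⟨h1, h2⟩ := Sigma.mk.inj_iff.1 h
    have h1' : a = c := eqv.injective h1
    subst h1'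
    simp only [heq_eq_eq] at h2
    subst h2
    rfl
  have hONf : Orthonormal ℂ Vf := hON.comp _ hinj
  have hiVf := orthonormal_iff_ite.1 hONf
  set U : Matrix (Fin d) (Fin d) ℂ := Matrix.of (fun a b => Vf (e b) a) with hU
  have hentry : ∀ (A : Matrix (Fin d) (Fin d) ℂ) (a b : Fin d),
      (star U * (A * U)) a b = ⟪Vf (e a), Matrix.toEuclideanLin A (Vf (e b))⟫_ℂ := by
    intro A a b
    rw [Matrix.mul_apply, PiLp.inner_apply]
    refine Finset.sum_congr rfl fun x _ => ?_
    rw [RCLike.inner_apply']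
    congr 1
  have hUmem : U ∈ Matrix.unitaryGroup (Fin d) ℂ := by
    rw [Matrix.mem_unitaryGroup_iff']
    ext a b
    have h1 : (star U * U) a b = ⟪Vf (e a), Vf (e b)⟫_ℂ := by
      rw [Matrix.mul_apply, PiLp.inner_apply]
      refine Finset.sum_congr rfl fun x _ => ?_
      rw [RCLike.inner_apply']
      rfl
    rw [h1, hiVf, Matrix.one_apply]
    by_cases hab : a = b
    · subst hab; simp
    · rw [if_neg hab, if_neg (fun hcon => hab (e.injective hcon))]
  have hblock : ∀ (A : Matrix (Fin d) (Fin d) ℂ)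
      (Ab : ∀ i : ι, Matrix (Fin (B i)) (Fin (B i)) ℂ),
      (∀ i (j : Fin (B i)), Matrix.toEuclideanLin A (V ⟨i, j⟩) = ∑ k, Ab i k j • V ⟨i, k⟩) →
      star U * A * U = (Matrix.blockDiagonal' (fun i => Ab (eqv i))).submatrix e e := by
    intro A Ab hAact
    rw [Matrix.mul_assoc]
    ext a b
    rw [hentry A a b, Matrix.submatrix_apply]
    obtain ⟨ri, rj⟩ := e a
    obtain ⟨si, sj⟩ := e b
    have hact' : Matrix.toEuclideanLin A (Vf ⟨si, sj⟩) =
        ∑ k : Fin (sz si), Ab (eqv si) k sj • Vf ⟨si, k⟩ := hAact (eqv si) sj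
    rw [hact', inner_sum]
    simp_rw [inner_smul_right, hiVf]
    by_cases h : ri = si
    · subst h
      rw [Matrix.blockDiagonal'_apply_eq]
      rw [Finset.sum_eq_single rj]
      · rw [if_pos rfl, mul_one]
      · intro k _ hk
        rw [if_neg (fun hcon => hk (by
          obtain ⟨-, h2⟩ := Sigma.mk.inj_iff.1 hcon
          simpa only [heq_eq_eq] using h2.symm)), mul_zero]
      · intro hcon
        exact absurd (Finset.mem_univ rj) hcon
    · rw [Matrix.blockDiagonal'_apply_ne _ _ _ h]
      refine Finset.sum_eq_zero fun k _ => ?_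
      rw [if_neg (fun hcon => h (by
        obtain ⟨h1, -⟩ := Sigma.mk.inj_iff.1 hcon
        exact h1)), mul_zero]
  refine ⟨l, sz, fun i => hB (eqv i), e, fun i => PB (eqv i), fun i => QB (eqv i), U,
    hUmem, hblock P _ hTact, hblock Q _ hSact, fun i => h1c (eqv i), fun i => h2c (eqv i)⟩
end

section
/- Let A = diag(P₀, 0) and B = diag(Q₀, 0) be rank-one projections on ℂᵈ (d ≥ 3) with angle θ as in Jordan form. If a point (x, y) satisfies 0 ≤ 2 - √(1-4x) - √(1-4y) < 2 sin²θ with x, y ∈ [0, 1/4], then there exists a density matrix ρ on ℂᵈ with ΔA_ρ = x and ΔB_ρ = y. -/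
open Matrix Complex Real
open scoped ComplexOrder

/-- The rank-one projection `A = diag(P₀, 0)` on `ℂᵈ`, `P₀ = [[1,0],[0,0]]`. -/
noncomputable def Ad (d : ℕ) : Matrix (Fin d) (Fin d) ℂ :=
  Matrix.of fun j k => if j.val = 0 ∧ k.val = 0 then 1 else 0

/-- The rank-one projection `B = diag(Q₀, 0)` on `ℂᵈ`, where
`Q₀ = [[cos²θ, cosθ sinθ],[cosθ sinθ, sin²θ]]`. -/
noncomputable def Bd (d : ℕ) (θ : ℝ) : Matrix (Fin d) (Fin d) ℂ :=
  Matrix.of fun j k =>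
    if j.val < 2 ∧ k.val < 2 then
      (((if j.val = 0 then Real.cos θ else Real.sin θ) *
        (if k.val = 0 then Real.cos θ else Real.sin θ) : ℝ) : ℂ)
    else 0

lemma smul_outer_posSemidef {n : Type*} [Fintype n] [DecidableEq n]
    (c : ℝ) (hc : 0 ≤ c) (ψ : n → ℂ) : ((c : ℂ) • outer ψ).PosSemidef := by
  rw [Matrix.posSemidef_iff_dotProduct_mulVec]
  constructor
  · ext i j
    simp [outer, Matrix.conjTranspose_apply, Matrix.smul_apply, Matrix.vecMulVec_apply,
      mul_comm, Complex.conj_ofReal]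
  · intro v
    have hmv : ((c : ℂ) • outer ψ) *ᵥ v = (c : ℂ) • ((star ψ ⬝ᵥ v) • ψ) := by
      ext i
      simp [outer, Matrix.mulVec, Matrix.vecMulVec_apply, dotProduct, Finset.mul_sum,
        Finset.sum_mul, mul_assoc, mul_comm, mul_left_comm]
    rw [hmv]
    have : star v ⬝ᵥ ((c : ℂ) • ((star ψ ⬝ᵥ v) • ψ)) =
        (c : ℂ) * ((star ψ ⬝ᵥ v) * (star v ⬝ᵥ ψ)) := by
      simp [dotProduct_smul, smul_eq_mul, mul_assoc]
    rw [this]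
    have hz : star v ⬝ᵥ ψ = star (star ψ ⬝ᵥ v) := by
      simp [dotProduct, star_sum, mul_comm]
    rw [hz]
    exact mul_nonneg (by exact_mod_cast hc) (mul_star_self_nonneg _)

lemma sum_fin_two {d : ℕ} (hd : 2 ≤ d) {M : Type*} [AddCommMonoid M] (f : Fin d → M)
    (hf : ∀ i : Fin d, 2 ≤ i.val → f i = 0) :
    ∑ i, f i = f ⟨0, by omega⟩ + f ⟨1, by omega⟩ := by
  rw [← Finset.sum_pair (a := (⟨0, by omega⟩ : Fin d)) (b := ⟨1, by omega⟩)
    (by simp [Fin.ext_iff])]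
  refine (Finset.sum_subset (Finset.subset_univ _) ?_).symm
  intro x _ hx
  apply hf
  simp only [Finset.mem_insert, Finset.mem_singleton, Fin.ext_iff] at hx
  push_neg at hx
  omega

lemma sum_fin_three {d : ℕ} (hd : 3 ≤ d) {M : Type*} [AddCommMonoid M] (f : Fin d → M)
    (hf : ∀ i : Fin d, 3 ≤ i.val → f i = 0) :
    ∑ i, f i = f ⟨0, by omega⟩ + f ⟨1, by omega⟩ + f ⟨2, by omega⟩ := by
  have : ({⟨0, by omega⟩, ⟨1, by omega⟩, ⟨2, by omega⟩} : Finset (Fin d)).sum f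
      = f ⟨0, by omega⟩ + f ⟨1, by omega⟩ + f ⟨2, by omega⟩ := by
    rw [Finset.sum_insert (by simp [Fin.ext_iff]), Finset.sum_pair (by simp [Fin.ext_iff]),
      add_assoc]
  rw [← this]
  refine (Finset.sum_subset (Finset.subset_univ _) ?_).symm
  intro x _ hx
  apply hf
  simp only [Finset.mem_insert, Finset.mem_singleton, Fin.ext_iff] at hx
  push_neg at hx
  omega

lemma trace_mul_two {d : ℕ} (hd : 3 ≤ d) (M ρ : Matrix (Fin d) (Fin d) ℂ)
    (hM : ∀ i j : Fin d, 2 ≤ i.val ∨ 2 ≤ j.val → M i j = 0) :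
    (M * ρ).trace =
      M ⟨0, by omega⟩ ⟨0, by omega⟩ * ρ ⟨0, by omega⟩ ⟨0, by omega⟩ +
      M ⟨0, by omega⟩ ⟨1, by omega⟩ * ρ ⟨1, by omega⟩ ⟨0, by omega⟩ +
      (M ⟨1, by omega⟩ ⟨0, by omega⟩ * ρ ⟨0, by omega⟩ ⟨1, by omega⟩ +
       M ⟨1, by omega⟩ ⟨1, by omega⟩ * ρ ⟨1, by omega⟩ ⟨1, by omega⟩) := by
  have hd2 : 2 ≤ d := by omega
  rw [Matrix.trace]
  simp only [Matrix.diag_apply, Matrix.mul_apply]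
  rw [sum_fin_two hd2 _ (fun i hi => Finset.sum_eq_zero fun j _ => by
    rw [hM i j (Or.inl hi), zero_mul])]
  rw [sum_fin_two hd2 _ (fun j hj => by rw [hM _ j (Or.inr hj), zero_mul])]
  rw [sum_fin_two hd2 _ (fun j hj => by rw [hM _ j (Or.inr hj), zero_mul])]


set_option maxHeartbeats 2000000 in
/-- for `A = diag(P₀,0)`, `B = diag(Q₀,0)` on `ℂᵈ` (`d ≥ 3`) with
angle `θ ∈ (0, π/2]`, any point `(x,y) ∈ [0,1/4]²` with
`0 ≤ 2 - √(1-4x) - √(1-4y) < 2 sin²θ` is attained by the variances of some density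
matrix. -/
theorem qudit_corner_region_attained (d : ℕ) (hd : 3 ≤ d) (θ : ℝ)
    (hθ : θ ∈ Set.Ioc 0 (Real.pi / 2)) (x y : ℝ)
    (hx : x ∈ Set.Icc 0 (1 / 4 : ℝ)) (hy : y ∈ Set.Icc 0 (1 / 4 : ℝ))
    (h0 : 0 ≤ 2 - Real.sqrt (1 - 4 * x) - Real.sqrt (1 - 4 * y))
    (h1 : 2 - Real.sqrt (1 - 4 * x) - Real.sqrt (1 - 4 * y)
      < 2 * (Real.sin θ) ^ 2) :
    ∃ ρ : Matrix (Fin d) (Fin d) ℂ, IsDensity ρ ∧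
      pvar (Ad d) ρ = x ∧ pvar (Bd d θ) ρ = y := by
  set s := Real.sin θ with hs_def
  set c := Real.cos θ with hc_def
  have hs : 0 < s := Real.sin_pos_of_pos_of_lt_pi hθ.1 (by linarith [hθ.2, Real.pi_pos])
  have hsc : s ^ 2 + c ^ 2 = 1 := by rw [hs_def, hc_def]; exact Real.sin_sq_add_cos_sq θ
  set p : ℝ := (1 - Real.sqrt (1 - 4 * x)) / 2 with hp_def
  set q : ℝ := (1 - Real.sqrt (1 - 4 * y)) / 2 with hq_def
  have hxs : Real.sqrt (1 - 4 * x) ^ 2 = 1 - 4 * x :=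
    Real.sq_sqrt (by linarith [hx.2])
  have hys : Real.sqrt (1 - 4 * y) ^ 2 = 1 - 4 * y :=
    Real.sq_sqrt (by linarith [hy.2])
  have hp0 : 0 ≤ p := by
    have : Real.sqrt (1 - 4 * x) ≤ 1 :=
      (Real.sqrt_le_sqrt (by linarith [hx.1])).trans_eq Real.sqrt_one
    rw [hp_def]; linarith
  have hq0 : 0 ≤ q := by
    have : Real.sqrt (1 - 4 * y) ≤ 1 :=
      (Real.sqrt_le_sqrt (by linarith [hy.1])).trans_eq Real.sqrt_one
    rw [hq_def]; linarith
  have hpx : p - p ^ 2 = x := by rw [hp_def]; nlinarith [hxs]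
  have hqy : q - q ^ 2 = y := by rw [hq_def]; nlinarith [hys]
  have hpq : p + q < s ^ 2 := by rw [hp_def, hq_def]; linarith
  set α : ℝ := p / s ^ 2 with hα_def
  set β : ℝ := q / s ^ 2 with hβ_def
  set γ : ℝ := 1 - (p + q) / s ^ 2 with hγ_def
  have hs2 : (0:ℝ) < s ^ 2 := by positivity
  have hα : 0 ≤ α := div_nonneg hp0 (le_of_lt hs2)
  have hβ : 0 ≤ β := div_nonneg hq0 (le_of_lt hs2)
  have hγ : 0 ≤ γ := by
    rw [hγ_def]
    have : (p + q) / s ^ 2 < 1 := (div_lt_one hs2).mpr hpq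
    linarith
  -- the three vectors
  set f1 : ℕ → ℝ := fun k => if k = 0 then s else if k = 1 then -c else 0 with hf1_def
  set f2 : ℕ → ℝ := fun k => if k = 1 then 1 else 0 with hf2_def
  set f3 : ℕ → ℝ := fun k => if k = 2 then 1 else 0 with hf3_def
  set ψ1 : Fin d → ℂ := fun i => ((f1 i.val : ℝ) : ℂ) with hψ1_def
  set ψ2 : Fin d → ℂ := fun i => ((f2 i.val : ℝ) : ℂ) with hψ2_def
  set ψ3 : Fin d → ℂ := fun i => ((f3 i.val : ℝ) : ℂ) with hψ3_def
  set ρ : Matrix (Fin d) (Fin d) ℂ :=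
    (α : ℂ) • outer ψ1 + (β : ℂ) • outer ψ2 + (γ : ℂ) • outer ψ3 with hρ_def
  have hρ_apply : ∀ i j : Fin d, ρ i j =
      ((α * (f1 i.val * f1 j.val) + β * (f2 i.val * f2 j.val)
        + γ * (f3 i.val * f3 j.val) : ℝ) : ℂ) := by
    intro i j
    simp only [hρ_def, Matrix.add_apply, Matrix.smul_apply, outer, Matrix.vecMulVec_apply,
      Pi.star_apply, hψ1_def, hψ2_def, hψ3_def, Complex.conj_ofReal, RCLike.star_def,
      smul_eq_mul]
    push_cast
    ring
  refine ⟨ρ, ⟨?_, ?_⟩, ?_, ?_⟩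
  · exact ((smul_outer_posSemidef α hα ψ1).add (smul_outer_posSemidef β hβ ψ2)).add
      (smul_outer_posSemidef γ hγ ψ3)
  · -- trace = 1
    rw [Matrix.trace]
    simp only [Matrix.diag_apply]
    rw [sum_fin_three hd (fun i => ρ i i) (fun i hi => by
      show ρ i i = 0
      rw [hρ_apply]
      have h0 : i.val ≠ 0 := by omega
      have h1 : i.val ≠ 1 := by omega
      have h2 : i.val ≠ 2 := by omega
      simp [hf1_def, hf2_def, hf3_def, h0, h1, h2])]
    show ρ ⟨0, by omega⟩ ⟨0, by omega⟩ + ρ ⟨1, by omega⟩ ⟨1, by omega⟩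
        + ρ ⟨2, by omega⟩ ⟨2, by omega⟩ = 1
    rw [hρ_apply, hρ_apply, hρ_apply, ← Complex.ofReal_add, ← Complex.ofReal_add,
      ← Complex.ofReal_one, Complex.ofReal_inj]
    simp only [hf1_def, hf2_def, hf3_def]
    norm_num
    have hαβγ : α + β + γ = 1 := by
      rw [hα_def, hβ_def, hγ_def]; field_simp; ring
    nlinarith [hsc]
  · -- pvar A = x
    have htr : (Ad d * ρ).trace = ((p : ℝ) : ℂ) := by
      rw [trace_mul_two hd _ _ (fun i j hij => by
        simp only [Ad, Matrix.of_apply]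
        have : ¬(i.val = 0 ∧ j.val = 0) := by omega
        simp [this])]
      simp only [Ad, Matrix.of_apply, hρ_apply]
      norm_num
      have g10 : f1 0 = s := by simp [hf1_def]
      have g20 : f2 0 = 0 := by simp [hf2_def]
      have g30 : f3 0 = 0 := by simp [hf3_def]
      rw [g10, g20, g30]
      exact_mod_cast congrArg Complex.ofReal
        (show α * (s * s) + β * (0 * 0) + γ * (0 * 0) = p by
          rw [hα_def]; field_simp [pow_two]; ring)
    rw [pvar, htr]
    simp only [Complex.ofReal_re]
    linarith [hpx]
  · -- pvar B = y
    have htr : (Bd d θ * ρ).trace = ((q : ℝ) : ℂ) := by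
      rw [trace_mul_two hd _ _ (fun i j hij => by
        simp only [Bd, Matrix.of_apply]
        have : ¬(i.val < 2 ∧ j.val < 2) := by omega
        rw [if_neg this])]
      simp only [Bd, Matrix.of_apply, hρ_apply]
      norm_num
      have g10 : f1 0 = s := by simp [hf1_def]
      have g11 : f1 1 = -c := by simp [hf1_def]
      have g20 : f2 0 = 0 := by simp [hf2_def]
      have g21 : f2 1 = 1 := by simp [hf2_def]
      have g30 : f3 0 = 0 := by simp [hf3_def]
      have g31 : f3 1 = 0 := by simp [hf3_def]
      rw [g10, g11, g20, g21, g30, g31]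
      have key : Real.cos θ * Real.cos θ * (α * (s * s) + β * (0 * 0) + γ * (0 * 0))
          + Real.cos θ * Real.sin θ * (α * (-c * s) + β * (1 * 0) + γ * (0 * 0))
          + (Real.sin θ * Real.cos θ * (α * (s * -c) + β * (0 * 1) + γ * (0 * 0))
            + Real.sin θ * Real.sin θ * (α * (-c * -c) + β * (1 * 1) + γ * (0 * 0))) = q := by
        rw [← hs_def, ← hc_def]
        have hβs : β * (s * s) = q := by rw [hβ_def, pow_two]; field_simp
        linear_combination hβs
      exact_mod_cast congrArg Complex.ofReal key
    rw [pvar, htr]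
    simp only [Complex.ofReal_re]
    linarith [hqy]
end

section
/- Let A, B be qubit projectors with angle θ as above, and let (x₁, y₁) be the coordinates of (ΔA - 1/8, ΔB - 1/8) rotated by -π/4. For every pure state ψ whose Bloch vector r = (r_x, 0, r_z) lies on the equator r_x² + r_z² = 1, the point (ΔA_ψ, ΔB_ψ) lies on the ellipse 64x₁²/(1+cos 4θ) + 64y₁²/(1-cos 4θ) = 1 (assuming θ ≠ π/4). -/
open Matrix Complex Real
open scoped ComplexOrder

lemma bloch_trace_re (a1 a2 a3 r1 r2 r3 : ℝ) :
    ((bloch (a1,a2,a3) * bloch (r1,r2,r3)).trace).re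
      = (1 + (a1*r1 + a2*r2 + a3*r3))/2 := by
  simp [bloch, pauliDot, σx, σy, σz, Matrix.trace, Matrix.mul_apply,
    Fin.sum_univ_two, Matrix.one_apply]
  ring

/-- for every pure state whose Bloch vector `r = (r_x, 0, r_z)` lies
on the equator `r_x² + r_z² = 1`, the point `(ΔA, ΔB)` lies on the ellipse
`64x₁²/(1+cos 4θ) + 64y₁²/(1-cos 4θ) = 1`, where `(x₁, y₁)` are the coordinates of
`(ΔA - 1/8, ΔB - 1/8)` rotated by `-π/4` (here `θ ∈ (0, π/2)`, `θ ≠ π/4`). -/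
theorem equator_states_on_ellipse (θ : ℝ) (hθ : θ ∈ Set.Ioo 0 (Real.pi / 2))
    (hθ' : θ ≠ Real.pi / 4) (rx rz : ℝ) (hr : rx ^ 2 + rz ^ 2 = 1) :
    let ΔA := pvar (bloch (0, 0, 1)) (bloch (rx, 0, rz));
    let ΔB := pvar (bloch (Real.sin (2 * θ), 0, Real.cos (2 * θ)))
      (bloch (rx, 0, rz));
    let x₁ := Real.cos (Real.pi / 4) * (ΔA - 1/8) +
      Real.sin (Real.pi / 4) * (ΔB - 1/8);
    let y₁ := -Real.sin (Real.pi / 4) * (ΔA - 1/8) +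
      Real.cos (Real.pi / 4) * (ΔB - 1/8);
    64 * x₁ ^ 2 / (1 + Real.cos (4 * θ)) +
      64 * y₁ ^ 2 / (1 - Real.cos (4 * θ)) = 1 := by
  intro ΔA ΔB x₁ y₁
  obtain ⟨hθ0, hθ1⟩ := hθ
  set s := Real.sin (2 * θ) with hs_def
  set c := Real.cos (2 * θ) with hc_def
  set v := rx * s + rz * c with hv_def
  have hsc : s ^ 2 + c ^ 2 = 1 := Real.sin_sq_add_cos_sq _
  have hs : s ≠ 0 := ne_of_gt (Real.sin_pos_of_pos_of_lt_pi (by linarith) (by linarith))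
  have hc : c ≠ 0 := by
    intro h
    apply hθ'
    have hmem1 : 2 * θ ∈ Set.Icc 0 Real.pi := ⟨by linarith, by linarith⟩
    have hmem2 : Real.pi / 2 ∈ Set.Icc 0 Real.pi :=
      ⟨by linarith [Real.pi_pos], by linarith [Real.pi_pos]⟩
    have h2θ := Real.injOn_cos hmem1 hmem2 (by rw [← hc_def, h, Real.cos_pi_div_two])
    linarith
  have hcos4 : Real.cos (4 * θ) = 2 * c ^ 2 - 1 := by
    have h4 : (4 : ℝ) * θ = 2 * (2 * θ) := by ring
    rw [h4, Real.cos_two_mul]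
  have hA : ΔA = (1 - rz ^ 2) / 4 := by
    show pvar (bloch (0, 0, 1)) (bloch (rx, 0, rz)) = _
    rw [pvar, bloch_trace_re]; ring
  have hB : ΔB = (1 - v ^ 2) / 4 := by
    show pvar (bloch (s, 0, c)) (bloch (rx, 0, rz)) = _
    rw [pvar, bloch_trace_re, hv_def]; ring
  have hw : Real.sqrt 2 ^ 2 = 2 := Real.sq_sqrt (by norm_num)
  have hx : 64 * x₁ ^ 2 = 2 * (rx ^ 2 - v ^ 2) ^ 2 := by
    show 64 * (Real.cos (Real.pi/4) * (ΔA - 1/8) + Real.sin (Real.pi/4) * (ΔB - 1/8)) ^ 2 = _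
    rw [Real.cos_pi_div_four, Real.sin_pi_div_four, hA, hB]
    have h1 : 1 - rz ^ 2 = rx ^ 2 := by linarith
    rw [← h1]
    nlinarith [hw]
  have hy : 64 * y₁ ^ 2 = 2 * (rz ^ 2 - v ^ 2) ^ 2 := by
    show 64 * (-Real.sin (Real.pi/4) * (ΔA - 1/8) + Real.cos (Real.pi/4) * (ΔB - 1/8)) ^ 2 = _
    rw [Real.cos_pi_div_four, Real.sin_pi_div_four, hA, hB]
    nlinarith [hw]
  have key : s ^ 2 * (rx ^ 2 - v ^ 2) ^ 2 + c ^ 2 * (rz ^ 2 - v ^ 2) ^ 2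
      = s ^ 2 * c ^ 2 := by
    rw [hv_def]
    have h1 : rx^2 - (rx*s+rz*c)^2 = c*(c*(rx^2-rz^2) - 2*rx*rz*s) := by
      linear_combination (-rx^2) * hsc
    have h2 : rz^2 - (rx*s+rz*c)^2 = -(s*(s*(rx^2-rz^2) + 2*rx*rz*c)) := by
      linear_combination (-rz^2) * hsc
    rw [h1, h2]
    linear_combination (s^2*c^2*((rx^2-rz^2)^2+(2*rx*rz)^2))*hsc
      + (s^2*c^2*(rx^2+rz^2+1))*hr
  have hd1 : 1 + Real.cos (4 * θ) = 2 * c ^ 2 := by rw [hcos4]; ring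
  have hd2 : 1 - Real.cos (4 * θ) = 2 * s ^ 2 := by rw [hcos4]; linarith
  rw [hd1, hd2]
  clear_value x₁ y₁
  field_simp
  linear_combination (s^2)*hx + (c^2)*hy + 2*key
end

section
/- Let A = diag(P₀, 0), B = diag(Q₀, 0) be rank-one projections on ℂᵈ (d ≥ 3) with Jordan angle θ > π/4. Then the uncertainty region covers the full box: for every (x, y) ∈ [0, 1/4]² there exists a density matrix ρ on ℂᵈ with ΔA_ρ = x and ΔB_ρ = y. -/
open Matrix Complex Real
open scoped ComplexOrder

lemma outer_posSemidef_s19 {n : Type*} [Fintype n] (w : n → ℂ) : (outer w).PosSemidef := by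
  rw [Matrix.posSemidef_iff_dotProduct_mulVec]
  constructor
  · ext p q
    simp [outer, Matrix.vecMulVec, Matrix.conjTranspose_apply, mul_comm]
  · intro v
    have h1 : ((outer w) *ᵥ v) = fun p => w p * ((star w) ⬝ᵥ v) := by
      funext p
      simp [outer, Matrix.mulVec, Matrix.vecMulVec, dotProduct, Finset.mul_sum, mul_assoc]
    rw [h1]
    have h2 : (star v) ⬝ᵥ (fun p => w p * ((star w) ⬝ᵥ v))
        = star ((star w) ⬝ᵥ v) * ((star w) ⬝ᵥ v) := by
      simp only [dotProduct, star_sum, star_mul', Pi.star_apply, Finset.sum_mul, star_star]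
      refine Finset.sum_congr rfl fun p _ => ?_
      ring
    rw [h2]
    exact star_mul_self_nonneg _

lemma smul_posSemidef_real {n : Type*} [Fintype n] {M : Matrix n n ℂ}
    (hM : M.PosSemidef) {r : ℝ} (hr : 0 ≤ r) : ((r : ℂ) • M).PosSemidef := by
  rw [Matrix.posSemidef_iff_dotProduct_mulVec]
  constructor
  · have h := hM.1
    unfold Matrix.IsHermitian at *
    rw [Matrix.conjTranspose_smul, h]
    congr 1
    simp
  · intro v
    have key : star v ⬝ᵥ ((r : ℂ) • M) *ᵥ v = (r : ℂ) * (star v ⬝ᵥ M *ᵥ v) := by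
      rw [Matrix.smul_mulVec, dotProduct_smul, smul_eq_mul]
    rw [key, Complex.le_def]
    have h1 := (Complex.le_def.mp (hM.dotProduct_mulVec_nonneg v)).1
    have h2 := (Complex.le_def.mp (hM.dotProduct_mulVec_nonneg v)).2
    simp only [Complex.zero_re, Complex.zero_im] at h1 h2
    have h2' : (star v ⬝ᵥ M *ᵥ v).im = 0 := h2.symm
    constructor
    · simp only [Complex.mul_re, Complex.ofReal_re, Complex.ofReal_im, Complex.zero_re, h2']
      simpa using mul_nonneg hr h1
    · simp [Complex.mul_im, h2']

lemma sum_three {d : ℕ} (hd : 3 ≤ d) (f : Fin d → ℂ)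
    (h : ∀ j : Fin d, 3 ≤ j.val → f j = 0) :
    ∑ j, f j = f ⟨0, by omega⟩ + f ⟨1, by omega⟩ + f ⟨2, by omega⟩ := by
  classical
  have hsub : (({⟨0, by omega⟩, ⟨1, by omega⟩, ⟨2, by omega⟩} : Finset (Fin d))) ⊆
      Finset.univ := Finset.subset_univ _
  rw [← Finset.sum_subset hsub (fun x _ hx => h x (by
      simp only [Finset.mem_insert, Finset.mem_singleton, Fin.ext_iff] at hx
      omega))]
  rw [Finset.sum_insert (by simp [Fin.ext_iff]), Finset.sum_insert (by simp [Fin.ext_iff]),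
    Finset.sum_singleton, add_assoc]

noncomputable def vec3 (d : ℕ) (c0 c1 c2 : ℝ) : Fin d → ℂ := fun j =>
  if j.val = 0 then (c0 : ℂ) else if j.val = 1 then (c1 : ℂ) else if j.val = 2 then (c2 : ℂ) else 0

lemma dot_vec3 {d : ℕ} (hd : 3 ≤ d) (a b c a' b' c' : ℝ) :
    star (vec3 d a b c) ⬝ᵥ vec3 d a' b' c' = ((a * a' + b * b' + c * c' : ℝ) : ℂ) := by
  rw [dotProduct, sum_three hd _ (fun j hj => by
    simp only [Pi.star_apply, vec3]
    rw [if_neg (by omega), if_neg (by omega), if_neg (by omega)]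
    simp)]
  simp only [Pi.star_apply, vec3]
  norm_num

lemma trace_outer_mul_outer {n : Type*} [Fintype n] (v w : n → ℂ) :
    (outer v * outer w).trace = (star v ⬝ᵥ w) * (star w ⬝ᵥ v) := by
  simp only [outer, Matrix.trace, Matrix.diag, Matrix.mul_apply, Matrix.vecMulVec_apply,
    Pi.star_apply, dotProduct, Finset.sum_mul_sum]
  rw [Finset.sum_comm]
  refine Finset.sum_congr rfl fun j _ => Finset.sum_congr rfl fun k _ => ?_
  ring

lemma trace_outer_vec3 {d : ℕ} (hd : 3 ≤ d) (a b c : ℝ) :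
    (outer (vec3 d a b c)).trace = ((a ^ 2 + b ^ 2 + c ^ 2 : ℝ) : ℂ) := by
  rw [outer, Matrix.trace]
  rw [show (Matrix.diag (Matrix.vecMulVec (vec3 d a b c) (star (vec3 d a b c))))
      = fun j => (star (vec3 d a b c)) j * (vec3 d a b c) j from by
    funext j; simp [Matrix.vecMulVec_apply, mul_comm]]
  rw [← dotProduct, dot_vec3 hd]
  push_cast
  ring

lemma Ad_eq_outer (d : ℕ) : Ad d = outer (vec3 d 1 0 0) := by
  ext j k
  simp only [Ad, Matrix.of_apply, outer, Matrix.vecMulVec_apply, Pi.star_apply, vec3]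
  by_cases hj : j.val = 0 <;> by_cases hk : k.val = 0 <;>
    simp [hj, hk] <;> split_ifs <;> simp

lemma Bd_eq_outer (d : ℕ) (θ : ℝ) : Bd d θ = outer (vec3 d (Real.cos θ) (Real.sin θ) 0) := by
  ext j k
  simp only [Bd, Matrix.of_apply, outer, Matrix.vecMulVec_apply, Pi.star_apply, vec3]
  rcases Nat.lt_or_ge j.val 2 with hj | hj
  · rcases Nat.lt_or_ge k.val 2 with hk | hk
    · rw [if_pos ⟨hj, hk⟩]
      have hj' : j.val = 0 ∨ j.val = 1 := by omega
      have hk' : k.val = 0 ∨ k.val = 1 := by omega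
      rcases hj' with h | h <;> rcases hk' with h' | h' <;>
        norm_num [h, h', Complex.ofReal_mul, RCLike.star_def, Complex.conj_ofReal,
          -Complex.ofReal_cos, -Complex.ofReal_sin]
    · rw [if_neg (by omega), if_neg (show ¬ k.val = 0 by omega),
        if_neg (show ¬ k.val = 1 by omega)]
      by_cases hk2 : k.val = 2
      · rw [if_pos hk2]; simp
      · rw [if_neg hk2]; simp
  · rw [if_neg (by omega), if_neg (show ¬ j.val = 0 by omega),
      if_neg (show ¬ j.val = 1 by omega)]
    by_cases hj2 : j.val = 2
    · rw [if_pos hj2]; simp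
    · rw [if_neg hj2]; simp

set_option maxHeartbeats 1000000 in
/-- for `A = diag(P₀,0)`, `B = diag(Q₀,0)` on `ℂᵈ` (`d ≥ 3`) with
Jordan angle `θ ∈ (π/4, π/2]`, the uncertainty region covers the full box
`[0,1/4]²`. -/
theorem qudit_region_full_box (d : ℕ) (hd : 3 ≤ d) (θ : ℝ)
    (hθ : θ ∈ Set.Ioc (Real.pi / 4) (Real.pi / 2)) (x y : ℝ)
    (hx : x ∈ Set.Icc 0 (1 / 4 : ℝ)) (hy : y ∈ Set.Icc 0 (1 / 4 : ℝ)) :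
    ∃ ρ : Matrix (Fin d) (Fin d) ℂ, IsDensity ρ ∧
      pvar (Ad d) ρ = x ∧ pvar (Bd d θ) ρ = y := by
  obtain ⟨hθ1, hθ2⟩ := hθ
  obtain ⟨hx0, hx1⟩ := hx
  obtain ⟨hy0, hy1⟩ := hy
  have hpi : (0:ℝ) < Real.pi := Real.pi_pos
  set c := Real.cos θ with hcdef
  set s := Real.sin θ with hsdef
  have hθpos : 0 < θ := lt_trans (by positivity) hθ1
  have hs_pos : 0 < s := Real.sin_pos_of_pos_of_lt_pi hθpos (lt_of_le_of_lt hθ2 (by linarith))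
  have hc_nonneg : 0 ≤ c := Real.cos_nonneg_of_mem_Icc ⟨by linarith, hθ2⟩
  have hcs : c^2 + s^2 = 1 := by rw [hcdef, hsdef]; exact Real.cos_sq_add_sin_sq θ
  have hs2 : 1/2 < s^2 := by
    have hmono := Real.strictMonoOn_sin ⟨by linarith, by linarith⟩
      (Set.mem_Icc.mpr ⟨by linarith, hθ2⟩) hθ1
    rw [Real.sin_pi_div_four] at hmono
    have hhalf : (Real.sqrt 2 / 2)^2 = 1/2 := by
      rw [div_pow, Real.sq_sqrt (by norm_num : (0:ℝ) ≤ 2)]; norm_num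
    calc (1:ℝ)/2 = (Real.sqrt 2 / 2)^2 := hhalf.symm
      _ < s^2 := by
        apply pow_lt_pow_left₀ hmono (by positivity) (by norm_num)
  -- the numbers a and b
  have h4x : 0 ≤ 1 - 4*x := by linarith
  have h4y : 0 ≤ 1 - 4*y := by linarith
  set a := (1 - Real.sqrt (1 - 4*x))/2 with hadef
  set b := (1 - Real.sqrt (1 - 4*y))/2 with hbdef
  have hsqx : Real.sqrt (1-4*x) ^ 2 = 1 - 4*x := Real.sq_sqrt h4x
  have hsqy : Real.sqrt (1-4*y) ^ 2 = 1 - 4*y := Real.sq_sqrt h4y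
  have hsqxnn : 0 ≤ Real.sqrt (1-4*x) := Real.sqrt_nonneg _
  have hsqynn : 0 ≤ Real.sqrt (1-4*y) := Real.sqrt_nonneg _
  have hsqxle : Real.sqrt (1-4*x) ≤ 1 := by
    have h := Real.sqrt_le_sqrt (show 1-4*x ≤ 1 by linarith)
    rwa [Real.sqrt_one] at h
  have hsqyle : Real.sqrt (1-4*y) ≤ 1 := by
    have h := Real.sqrt_le_sqrt (show 1-4*y ≤ 1 by linarith)
    rwa [Real.sqrt_one] at h
  have ha0 : 0 ≤ a := by rw [hadef]; linarith
  have hb0 : 0 ≤ b := by rw [hbdef]; linarith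
  have ha12 : a ≤ 1/2 := by rw [hadef]; linarith
  have hb12 : b ≤ 1/2 := by rw [hbdef]; linarith
  have hax : a - a^2 = x := by rw [hadef]; linear_combination (-1/4 : ℝ) * hsqx
  have hby : b - b^2 = y := by rw [hbdef]; linear_combination (-1/4 : ℝ) * hsqy
  have ha1 : a ≤ 1 := by linarith
  have hsa : Real.sqrt a ^ 2 = a := Real.sq_sqrt ha0
  have hsa' : Real.sqrt (1-a) ^ 2 = 1-a := Real.sq_sqrt (by linarith)
  have hsaa : Real.sqrt a * Real.sqrt a = a := Real.mul_self_sqrt ha0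
  have hsaa' : Real.sqrt (1-a) * Real.sqrt (1-a) = 1-a := Real.mul_self_sqrt (by linarith)
  set bm := (c * Real.sqrt a + s * Real.sqrt (1-a))^2 with hbm
  have hbm_half : 1/2 ≤ bm := by
    have h1 : 0 ≤ c * Real.sqrt a := mul_nonneg hc_nonneg (Real.sqrt_nonneg _)
    have h2 : 0 ≤ s * Real.sqrt (1-a) := mul_nonneg hs_pos.le (Real.sqrt_nonneg _)
    have hsc : c^2 ≤ s^2 := by linarith
    have hprod : 0 ≤ (s^2 - c^2) * (1/2 - a) :=
      mul_nonneg (by linarith) (by linarith)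
    have hexp2 : c^2*a + s^2*(1-a) - 1/2 = (s^2 - c^2)*(1/2 - a) + (c^2+s^2-1)/2 := by ring
    have hkey : c^2 * a + s^2 * (1-a) ≥ 1/2 := by linarith
    have hexp : bm = c^2 * a + s^2*(1-a) + 2*(c*Real.sqrt a)*(s*Real.sqrt (1-a)) := by
      rw [hbm]; linear_combination c^2 * hsa + s^2 * hsa'
    linarith [mul_nonneg h1 h2]
  have hbm_pos : 0 < bm := by linarith
  set l := b / bm with hldef
  have hl0 : 0 ≤ l := div_nonneg hb0 hbm_pos.le
  have hl1 : l ≤ 1 := by rw [hldef, div_le_one hbm_pos]; linarith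
  have hbmul : l * bm = b := by rw [hldef, div_mul_cancel₀ b hbm_pos.ne']
  have hs2pos : (0:ℝ) < s^2 := by positivity
  have hK1 : 0 ≤ (1-l) * (a / s^2) := mul_nonneg (by linarith) (div_nonneg ha0 hs2pos.le)
  have has2 : a / s^2 ≤ 1 := by rw [div_le_one hs2pos]; linarith
  have hK2 : 0 ≤ (1-l) * (1 - a / s^2) := mul_nonneg (by linarith) (by linarith)
  set ρ : Matrix (Fin d) (Fin d) ℂ :=
    (((1-l) * (a / s^2) : ℝ) : ℂ) • outer (vec3 d s (-c) 0)
    + (((1-l) * (1 - a / s^2) : ℝ) : ℂ) • outer (vec3 d 0 0 1)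
    + ((l : ℝ) : ℂ) • outer (vec3 d (Real.sqrt a) (Real.sqrt (1-a)) 0) with hρ
  -- trace identities
  have hTA : (Ad d * ρ).trace = ((a : ℝ) : ℂ) := by
    rw [hρ, Ad_eq_outer, Matrix.mul_add, Matrix.mul_add, Matrix.mul_smul, Matrix.mul_smul,
      Matrix.mul_smul, Matrix.trace_add, Matrix.trace_add, Matrix.trace_smul,
      Matrix.trace_smul, Matrix.trace_smul, trace_outer_mul_outer, trace_outer_mul_outer,
      trace_outer_mul_outer, dot_vec3 hd, dot_vec3 hd, dot_vec3 hd, dot_vec3 hd,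
      dot_vec3 hd, dot_vec3 hd]
    simp only [smul_eq_mul, ← Complex.ofReal_mul, ← Complex.ofReal_add]
    rw [Complex.ofReal_inj]
    have key : (1-l) * (a / s^2) * (s*s) + l * (Real.sqrt a * Real.sqrt a) = a := by
      rw [hsaa]; field_simp; ring
    linear_combination key
  have hTB : (Bd d θ * ρ).trace = ((b : ℝ) : ℂ) := by
    rw [hρ, Bd_eq_outer, Matrix.mul_add, Matrix.mul_add, Matrix.mul_smul, Matrix.mul_smul,
      Matrix.mul_smul, Matrix.trace_add, Matrix.trace_add, Matrix.trace_smul,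
      Matrix.trace_smul, Matrix.trace_smul, trace_outer_mul_outer, trace_outer_mul_outer,
      trace_outer_mul_outer, dot_vec3 hd, dot_vec3 hd, dot_vec3 hd, dot_vec3 hd,
      dot_vec3 hd, dot_vec3 hd]
    simp only [smul_eq_mul, ← Complex.ofReal_mul, ← Complex.ofReal_add]
    rw [Complex.ofReal_inj]
    linear_combination hbmul - l * hbm
  refine ⟨ρ, ⟨?_, ?_⟩, ?_, ?_⟩
  · exact Matrix.PosSemidef.add
      (Matrix.PosSemidef.add (smul_posSemidef_real (outer_posSemidef_s19 _) hK1)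
        (smul_posSemidef_real (outer_posSemidef_s19 _) hK2))
      (smul_posSemidef_real (outer_posSemidef_s19 _) hl0)
  · rw [hρ, Matrix.trace_add, Matrix.trace_add, Matrix.trace_smul, Matrix.trace_smul,
      Matrix.trace_smul, trace_outer_vec3 hd, trace_outer_vec3 hd, trace_outer_vec3 hd]
    simp only [smul_eq_mul, ← Complex.ofReal_mul, ← Complex.ofReal_add]
    rw [show (1 : ℂ) = ((1:ℝ):ℂ) by norm_num, Complex.ofReal_inj]
    have hc2 : (-c)^2 = 1 - s^2 := by rw [neg_pow]; simp; linarith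
    rw [hsa, hsa', hc2]
    field_simp
    ring
  · simp only [pvar, hTA, Complex.ofReal_re]
    linarith [hax]
  · simp only [pvar, hTB, Complex.ofReal_re]
    linarith [hby]
end
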